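/- arXiv:1101.1019 — 5 statements merged into one kernel-verified Lean document; each statement's English description precedes it below -/
import Mathlib

section
/- Constrained symmetric Ekeland principle. In the abstract symmetrization framework, let X be a Banach space, G_j : X → ℝ (1 ≤ j ≤ m) functions of class C¹, 1 ≤ p ≤ m, and 𝒞 := {u ∈ X : G_j(u) = 0 for 1 ≤ j ≤ p and G_j(u) ≥ 0 for p+1 ≤ j ≤ m}; for u ∈ 𝒞 let ℐ(u) := {j : G_j(u) = 0}. Assume: f : X → ℝ is Fréchet differentiable with −∞ < inf_𝒞 f < +∞; for all u ∈ 𝒞 there exists ξ ∈ 𝒞 ∩ S with f(ξ) ≤ f(u); for all u ∈ 𝒞 the derivatives {dG_j(u)}_{j ∈ ℐ(u)} are linearly independent in X'; and for all u ∈ 𝒞 ∩ S and H ∈ ℋ*, u^H ∈ 𝒞 and f(u^H) ≤ f(u). Then for every ε > 0 there exist u_ε ∈ 𝒞 and λ_1, …, λ_m ∈ ℝ, with λ_j ≥ 0 for p+1 ≤ j ≤ m and λ_j = 0 whenever G_j(u_ε) ≠ 0, such that f(u_ε) ≤ inf_𝒞 f + ε², ‖u_ε − u_ε*‖_V < (K(C_Θ+1)+1)ε,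 and ‖df(u_ε) − Σ_{j=1}^m λ_j dG_j(u_ε)‖_{X'} ≤ ε. -/
/-!
Take `u₀ ∈ 𝒞` with `f u₀ < inf_𝒞 f + ε²` and `ξ ∈ 𝒞 ∩ S` with `f ξ ≤ f u₀`. Polarizations keep
`𝒞 ∩ S`, do not increase `f` and do not change the symmetrization, so a long enough iterated
polarization `w` of `ξ` is as good as `ξ` and satisfies `‖w - w*‖_V < ε`. Ekeland's principle on the
closed set `𝒞`, started at `w`, yields `u_ε` with `‖u_ε - w‖ ≤ ε` minimizing `f + ε‖· - u_ε‖`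
on `𝒞`.
Since `*` is `V`-nonexpansive on `S` (a limit of nonexpansive iterates) and `Θ` is Lipschitz,
`‖u_ε - u_ε*‖_V ≤ K (C_Θ + 1) ‖u_ε - w‖ + ‖w - w*‖_V`.

For the multipliers: independence of the active gradients and the inverse function theorem give,
for each direction `h` of the linearized cone at `u_ε`, a curve in `𝒞` with velocity `h`, so
`df(u_ε) h + ε‖h‖ ≥ 0` on that cone. A Hahn–Banach extension dominated by `ε‖x‖` plus an exact
penalty for leaving the cone splits `df(u_ε)` into a part of norm `≤ ε` and a combination of the
active gradients with the correct signs.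
-/

open Filter Topology Metric Set

section Ekeland

variable {α : Type*} [MetricSpace α] {f : α → ℝ} {ε η : ℝ} {u v : α}

def ekelandSet (f : α → ℝ) (ε : ℝ) (u : α) : Set α := {v | f v + ε * dist v u ≤ f u}

theorem self_mem_ekelandSet : u ∈ ekelandSet f ε u := by simp [ekelandSet]

theorem ekelandSet_subset (hε : 0 ≤ ε) (hv : v ∈ ekelandSet f ε u) :
    ekelandSet f ε v ⊆ ekelandSet f ε u := fun x hx => by
  simp only [ekelandSet, mem_ofPred_eq] at hv hx ⊢
  nlinarith [dist_triangle x v u]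

theorem isClosed_ekelandSet (hf : LowerSemicontinuous f) (u : α) :
    IsClosed (ekelandSet f ε u) :=
  (hf.add (continuous_const.mul (continuous_id.dist continuous_const)).lowerSemicontinuous
    ).isClosed_preimage (f u)

theorem ekelandSet_subset_closedBall (hε : 0 < ε)
    (hv : ∀ x ∈ ekelandSet f ε u, f v ≤ f x + η) (hvu : v ∈ ekelandSet f ε u) :
    ekelandSet f ε v ⊆ closedBall v (η / ε) := fun x hx => by
  have := hv x (ekelandSet_subset hε.le hvu hx)
  rw [mem_closedBall, le_div_iff₀' hε]
  simp only [ekelandSet, mem_ofPred_eq] at hx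
  linarith

theorem exists_mem_ekelandSet_le_add (hf : BddBelow (range f)) (hη : 0 < η) (u : α) :
    ∃ v ∈ ekelandSet f ε u, ∀ x ∈ ekelandSet f ε u, f v ≤ f x + η := by
  have hne : (f '' ekelandSet f ε u).Nonempty := ⟨_, mem_image_of_mem f self_mem_ekelandSet⟩
  obtain ⟨_, ⟨v, hv, rfl⟩, hlt⟩ := exists_lt_of_csInf_lt hne (lt_add_of_pos_right _ hη)
  refine ⟨v, hv, fun x hx => ?_⟩
  have := csInf_le (hf.mono (image_subset_range _ _)) (mem_image_of_mem f hx)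
  linarith

/-- Ekeland's variational principle. -/
theorem exists_forall_lt_add_mul_dist [CompleteSpace α] (hf : LowerSemicontinuous f) (hε : 0 < ε)
    {δ : ℝ} {w : α} (hw : ∀ v, f w ≤ f v + δ) :
    ∃ u, f u ≤ f w ∧ dist u w ≤ δ / ε ∧ ∀ v, v ≠ u → f u < f v + ε * dist v u := by
  have hbdd : BddBelow (range f) := ⟨f w - δ, by rintro _ ⟨v, rfl⟩; linarith [hw v]⟩
  choose next hnext hnext_le using fun (n : ℕ) u =>
    exists_mem_ekelandSet_le_add hbdd (ε := ε) (Nat.one_div_pos_of_nat (n := n)) u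
  let seq : ℕ → α := fun n => Nat.rec w (fun k x => next k x) n
  let s : ℕ → Set α := fun n => ekelandSet f ε (seq (n + 1))
  have hs_anti : Antitone s := antitone_nat_of_succ_le fun n =>
    ekelandSet_subset hε.le (hnext _ _)
  have hs_ball n : s n ⊆ closedBall (seq (n + 1)) ((1 / (n + 1)) / ε) :=
    ekelandSet_subset_closedBall hε (hnext_le n _) (hnext n _)
  have hdiam n : diam (s n) ≤ 2 * ((1 / (n + 1)) / ε) :=
    diam_le_of_subset_closedBall (by positivity) (hs_ball n)
  have hdiam_lim : Tendsto (fun n => diam (s n)) atTop (𝓝 0) := by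
    refine squeeze_zero (fun _ => diam_nonneg) hdiam ?_
    simpa using ((tendsto_one_div_add_atTop_nhds_zero_nat).div_const ε).const_mul 2
  -- The nested closed sets `s n` shrink to a point `u`, and `ekelandSet f ε u ⊆ s n` for all `n`.
  obtain ⟨u, hu⟩ := nonempty_iInter_of_nonempty_biInter (fun n => isClosed_ekelandSet hf _)
    (fun n => isBounded_closedBall.subset (hs_ball n))
    (fun N => ⟨seq (N + 1), mem_iInter₂.2 fun n hn => hs_anti hn self_mem_ekelandSet⟩) hdiam_lim
  have hu_mem n : u ∈ s n := mem_iInter.1 hu n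
  have hu_w : f u + ε * dist u w ≤ f w := ekelandSet_subset hε.le (hnext 0 w) (hu_mem 0)
  refine ⟨u, by nlinarith [dist_nonneg (x := u) (y := w)], ?_, fun v hvu => ?_⟩
  · rw [le_div_iff₀' hε]
    linarith [hw u]
  · by_contra! hv
    have hv_mem n : v ∈ s n := ekelandSet_subset hε.le (hu_mem n) hv
    have hdist : dist v u ≤ 0 := le_of_tendsto_of_tendsto' tendsto_const_nhds hdiam_lim
      fun n => dist_le_diam_of_mem (isBounded_closedBall.subset (hs_ball n)) (hv_mem n) (hu_mem n)
    exact hvu (dist_le_zero.1 hdist)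

theorem IsClosed.exists_isMinOn_add_mul_dist [CompleteSpace α] {s : Set α} (hs : IsClosed s)
    (hf : LowerSemicontinuousOn f s) (hε : 0 < ε) {δ : ℝ} {w : α} (hw₀ : w ∈ s)
    (hw : ∀ v ∈ s, f w ≤ f v + δ) :
    ∃ u ∈ s, f u ≤ f w ∧ dist u w ≤ δ / ε ∧ IsMinOn (fun v => f v + ε * dist v u) s u := by
  have := hs.completeSpace_coe
  obtain ⟨u, hfu, hdist, hmin⟩ := exists_forall_lt_add_mul_dist
    (lowerSemicontinuous_restrict_iff.2 hf) hε (w := ⟨w, hw₀⟩) fun v => hw v v.2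
  refine ⟨u, u.2, hfu, hdist, fun v hv => ?_⟩
  rcases eq_or_ne (⟨v, hv⟩ : s) u with rfl | hvu
  · simp
  · simpa [Subtype.dist_eq] using (hmin _ hvu).le

end Ekeland

section TangentCone

variable {E : Type*} [NormedAddCommGroup E] [NormedSpace ℝ E] {f : E → ℝ} {f' : StrongDual ℝ E}
  {s : Set E} {a y : E} {ε : ℝ}

theorem IsLocalMinOn.hasFDerivWithinAt_add_mul_norm_nonneg
    (h : IsLocalMinOn (fun v => f v + ε * ‖v - a‖) s a) (hf : HasFDerivWithinAt f f' s a)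
    (hy : y ∈ posTangentConeAt s a) : 0 ≤ f' y + ε * ‖y‖ := by
  rcases exists_fun_of_mem_tangentConeAt hy with ⟨ι, l, hl, c, d, hd₀, hd, hcd⟩
  have hlim : Tendsto (fun n => c n • (f (a + d n) - f a) + ε * ‖c n • d n‖) l
      (𝓝 (f' y + ε * ‖y‖)) :=
    (hf.lim hd₀ hd hcd).add (hcd.norm.const_mul ε)
  refine ge_of_tendsto hlim ?_
  replace hd : Tendsto (fun n => a + d n) l (𝓝[s] (a + 0)) :=
    tendsto_nhdsWithin_iff.2 ⟨tendsto_const_nhds.add hd₀, hd⟩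
  rw [add_zero] at hd
  filter_upwards [hd.eventually h] with n hn
  simp only [sub_self, norm_zero, mul_zero, add_zero, add_sub_cancel_left] at hn
  rw [NNReal.smul_def, NNReal.smul_def, norm_smul, smul_eq_mul,
    Real.norm_of_nonneg (c n).coe_nonneg]
  nlinarith [(c n).coe_nonneg]

theorem HasDerivAt.mem_posTangentConeAt {u : ℝ → E} (hu : HasDerivAt u y 0)
    (hs : ∀ᶠ t in 𝓝[>] 0, u t ∈ s) : y ∈ posTangentConeAt s (u 0) := by
  refine mem_tangentConeAt_of_seq (𝓝[>] 0) (fun t => t⁻¹.toNNReal) (fun t => u t - u 0) ?_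
    (by simpa using hs) ?_
  · exact tendsto_nhdsWithin_of_tendsto_nhds
      (by simpa using hu.continuousAt.tendsto.sub_const (u 0))
  · refine ((hasDerivAt_iff_tendsto_slope.1 hu).mono_left
      (nhdsWithin_mono _ fun t ht => ne_of_gt ht)).congr' ?_
    filter_upwards [self_mem_nhdsWithin] with t ht
    rw [NNReal.smul_def, Real.coe_toNNReal _ (inv_nonneg.2 (le_of_lt ht)), slope_def_module,
      sub_zero]

end TangentCone

theorem HasStrictFDerivAt.exists_curve_map_eq_add_smul {𝕜 E F : Type*} [NontriviallyNormedField 𝕜]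
    [NormedAddCommGroup E] [NormedSpace 𝕜 E] [CompleteSpace E]
    [NormedAddCommGroup F] [NormedSpace 𝕜 F] {Φ : E → F} {T : E →L[𝕜] F} {a : E}
    (hΦ : HasStrictFDerivAt Φ T a) {R : F →L[𝕜] E} (hR : T.comp R = .id 𝕜 F) (h : E) :
    ∃ u : 𝕜 → E, u 0 = a ∧ HasDerivAt u h 0 ∧ ∀ᶠ t in 𝓝 0, Φ (u t) = Φ a + t • T h := by
  -- `Ψ` has derivative `id` at `a` and `T ∘ Ψ = Φ`, so its local inverse straightens `Φ` out.
  set Ψ : E → E := fun x => x + R (Φ x - T x)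
  have hTΨ x : T (Ψ x) = Φ x := by
    rw [map_add, show T (R (Φ x - T x)) = Φ x - T x from congr($hR _), add_sub_cancel]
  have hΨ : HasStrictFDerivAt Ψ ((ContinuousLinearEquiv.refl 𝕜 E : E →L[𝕜] E)) a := by
    have : HasStrictFDerivAt Ψ (.id 𝕜 E + R.comp (T - T)) a :=
      (hasStrictFDerivAt_id a).add (R.hasStrictFDerivAt.comp a (hΦ.sub T.hasStrictFDerivAt))
    rwa [sub_self, ContinuousLinearMap.comp_zero, add_zero] at this
  set g := hΨ.localInverse Ψ _ a
  have hline : HasDerivAt (fun t : 𝕜 => Ψ a + t • h) h 0 := by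
    simpa using ((hasDerivAt_id (0 : 𝕜)).smul_const h).const_add (Ψ a)
  refine ⟨fun t => g (Ψ a + t • h), by simp [g], ?_, ?_⟩
  · have hg : HasFDerivAt g (ContinuousLinearMap.id 𝕜 E) (Ψ a + (0 : 𝕜) • h) := by
      simpa using hΨ.to_localInverse.hasFDerivAt
    exact hg.comp_hasDerivAt 0 hline
  · have hcont : Tendsto (fun t : 𝕜 => Ψ a + t • h) (𝓝 0) (𝓝 (Ψ a)) := by
      simpa using hline.continuousAt.tendsto
    filter_upwards [hcont.eventually hΨ.eventually_right_inverse] with t ht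
    rw [← hTΨ, ht, map_add, map_smul, hTΨ]

theorem LinearIndependent.exists_rightInverse_pi {X ι : Type*} [NormedAddCommGroup X]
    [NormedSpace ℝ X] [Finite ι] {L : ι → StrongDual ℝ X} (hL : LinearIndependent ℝ L) :
    ∃ R : (ι → ℝ) →L[ℝ] X, (ContinuousLinearMap.pi L).comp R = .id ℝ (ι → ℝ) := by
  have := Fintype.ofFinite ι
  have hL' : LinearIndependent ℝ fun i x => L i x := by
    refine Fintype.linearIndependent_iff.2 fun g hg => Fintype.linearIndependent_iff.1 hL g ?_
    ext x
    simpa using congrFun hg x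
  refine (ContinuousLinearMap.pi L).exists_rightInverse_of_surjective ?_
  rw [← span_flip_eq_top_iff_linearIndependent.2 hL']
  exact (Submodule.span_eq _).symm

section ApproximateFarkas

variable {ι : Type*} (E : Set ι)

open Classical in
/-- The coordinates in which `y` violates `y i = 0` (`i ∈ E`) and `0 ≤ y i` (`i ∉ E`). -/
noncomputable def coneDefect (y : ι → ℝ) : ι → ℝ := fun i => if i ∈ E then y i else min (y i) 0

theorem coneDefect_smul {c : ℝ} (hc : 0 ≤ c) (y : ι → ℝ) :
    coneDefect E (c • y) = c • coneDefect E y := by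
  ext i
  by_cases hi : i ∈ E <;> simp [coneDefect, hi, mul_min_of_nonneg _ _ hc]

theorem norm_coneDefect_add_le [Fintype ι] (y z : ι → ℝ) :
    ‖coneDefect E (y + z)‖ ≤ ‖coneDefect E y‖ + ‖coneDefect E z‖ := by
  refine (pi_norm_le_iff_of_nonneg (by positivity)).2 fun i => ?_
  refine le_trans ?_ (add_le_add (norm_le_pi_norm _ i) (norm_le_pi_norm _ i))
  by_cases hi : i ∈ E
  · simpa [coneDefect, hi] using abs_add_le (y i) (z i)
  · simp only [coneDefect, hi, if_false, Pi.add_apply, Real.norm_eq_abs]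
    rw [abs_of_nonpos (min_le_right _ _), abs_of_nonpos (min_le_right _ _),
      abs_of_nonpos (min_le_right _ _)]
    have := le_min (add_le_add (min_le_left (y i) 0) (min_le_left (z i) 0))
      (add_nonpos (min_le_right (y i) 0) (min_le_right (z i) 0))
    linarith

theorem coneDefect_zero : coneDefect E (0 : ι → ℝ) = 0 := by
  simpa using coneDefect_smul E le_rfl (0 : ι → ℝ)

theorem coneDefect_eq_zero_of_not_mem [DecidableEq ι] {i : ι} (hi : i ∉ E) :
    coneDefect E (fun j => if i = j then 1 else 0) = 0 := by
  ext j
  by_cases hj : j ∈ E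
  · simp [coneDefect, hj, show i ≠ j by rintro rfl; exact hi hj]
  · by_cases hij : i = j <;> simp [coneDefect, hj, hij]

theorem sub_coneDefect_apply_of_mem (y : ι → ℝ) {i : ι} (hi : i ∈ E) :
    (y - coneDefect E y) i = 0 := by
  simp [coneDefect, hi]

theorem sub_coneDefect_apply_nonneg (y : ι → ℝ) {i : ι} (hi : i ∉ E) :
    0 ≤ (y - coneDefect E y) i := by
  simp [coneDefect, hi]

variable {X : Type*} [NormedAddCommGroup X] [NormedSpace ℝ X] [Fintype ι]
  {L : ι → StrongDual ℝ X} {φ : StrongDual ℝ X} {ε : ℝ}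

theorem neg_le_add_mul_norm_coneDefect {R : (ι → ℝ) →L[ℝ] X}
    (hR : (ContinuousLinearMap.pi L).comp R = .id ℝ (ι → ℝ)) (hε : 0 ≤ ε)
    (hφ : ∀ h, (∀ i ∈ E, L i h = 0) → (∀ i ∉ E, 0 ≤ L i h) → 0 ≤ φ h + ε * ‖h‖) (h : X) :
    -φ h ≤ ε * ‖h‖ + (ε + ‖φ‖) * ‖R‖ * ‖coneDefect E (ContinuousLinearMap.pi L h)‖ := by
  -- `h'` is a point of the cone at distance `‖R d‖` from `h`
  set d := coneDefect E (ContinuousLinearMap.pi L h)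
  set h' := h - R d
  have hLh' : ContinuousLinearMap.pi L h' = ContinuousLinearMap.pi L h - d := by
    rw [map_sub, show ContinuousLinearMap.pi L (R d) = d from congr($hR d)]
  have hh' := hφ h' (fun i hi => (congrFun hLh' i).trans (sub_coneDefect_apply_of_mem E _ hi))
    (fun i hi => (sub_coneDefect_apply_nonneg E _ hi).trans_eq (congrFun hLh' i).symm)
  have hnorm : ‖h'‖ ≤ ‖h‖ + ‖R d‖ := norm_sub_le _ _
  have hRd : ‖R d‖ ≤ ‖R‖ * ‖d‖ := R.le_opNorm d
  have hφRd : -φ (R d) ≤ ‖φ‖ * ‖R d‖ := (neg_le_abs _).trans (φ.le_opNorm _)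
  have : φ h = φ h' + φ (R d) := by simp [h']
  nlinarith [norm_nonneg φ, norm_nonneg (R d)]

theorem exists_linearMap_eq_neg_of_le_penalty {R : (ι → ℝ) →L[ℝ] X}
    (hR : (ContinuousLinearMap.pi L).comp R = .id ℝ (ι → ℝ)) (hε : 0 ≤ ε)
    (hφ : ∀ h, (∀ i ∈ E, L i h = 0) → (∀ i ∉ E, 0 ≤ L i h) → 0 ≤ φ h + ε * ‖h‖) :
    ∃ g : X × (ι → ℝ) →ₗ[ℝ] ℝ, (∀ h, g (h, ContinuousLinearMap.pi L h) = -φ h) ∧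
      ∀ p, g p ≤ ε * ‖p.1‖ + (ε + ‖φ‖) * ‖R‖ * ‖coneDefect E p.2‖ := by
  set T := ContinuousLinearMap.pi L
  set M := (ε + ‖φ‖) * ‖R‖
  set N : X × (ι → ℝ) → ℝ := fun p => ε * ‖p.1‖ + M * ‖coneDefect E p.2‖
  have hN_smul (c : ℝ) (hc : 0 < c) p : N (c • p) = c * N p := by
    simp only [N, Prod.smul_fst, Prod.smul_snd, norm_smul, coneDefect_smul E hc.le,
      Real.norm_of_nonneg hc.le]
    ring
  have hN_add p q : N (p + q) ≤ N p + N q := by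
    have := norm_coneDefect_add_le E p.2 q.2
    have := norm_add_le p.1 q.1
    have : 0 ≤ M := by positivity
    simp only [N, Prod.fst_add, Prod.snd_add]
    nlinarith
  let f₀ : X × (ι → ℝ) →ₗ.[ℝ] ℝ :=
    ⟨(T : X →ₗ[ℝ] ι → ℝ).graph,
      -(φ : X →ₗ[ℝ] ℝ) ∘ₗ LinearMap.fst ℝ X (ι → ℝ) ∘ₗ Submodule.subtype _⟩
  obtain ⟨g, hg_eq, hg_le⟩ := exists_extension_of_le_sublinear f₀ N hN_smul hN_add <| by
    rintro ⟨⟨h, y⟩, hy⟩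
    change y = T h at hy
    subst hy
    exact neg_le_add_mul_norm_coneDefect E hR hε hφ h
  exact ⟨g, fun h => hg_eq ⟨(h, T h), rfl⟩, hg_le⟩

theorem exists_nonneg_norm_sub_sum_smul_le (hL : LinearIndependent ℝ L) (hε : 0 ≤ ε)
    (hφ : ∀ h, (∀ i ∈ E, L i h = 0) → (∀ i ∉ E, 0 ≤ L i h) → 0 ≤ φ h + ε * ‖h‖) :
    ∃ lam : ι → ℝ, (∀ i ∉ E, 0 ≤ lam i) ∧ ‖φ - ∑ i, lam i • L i‖ ≤ ε := by
  classical
  obtain ⟨R, hR⟩ := hL.exists_rightInverse_pi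
  -- The multipliers are `-g (0, e i)`; the penalty vanishes at `(0, e i)` for `i ∉ E`.
  obtain ⟨g, hg_graph, hg_le⟩ := exists_linearMap_eq_neg_of_le_penalty E hR hε hφ
  set e : ι → ι → ℝ := fun i j => if i = j then 1 else 0
  have hg_fst h : g (h, 0) ≤ ε * ‖h‖ := by simpa [coneDefect_zero] using hg_le (h, 0)
  have hg_decomp h : -φ h = g (h, 0) + ∑ i, L i h * g (0, e i) := by
    have hsnd := LinearMap.pi_apply_eq_sum_univ (g ∘ₗ LinearMap.inr ℝ X (ι → ℝ))
      (ContinuousLinearMap.pi L h)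
    rw [← hg_graph, show (h, ContinuousLinearMap.pi L h) = (h, 0) + (0, ContinuousLinearMap.pi L h)
      by simp, map_add]
    simpa using hsnd
  refine ⟨fun i => -g (0, e i), fun i hi => ?_, ?_⟩
  · have hei : coneDefect E (e i) = 0 := coneDefect_eq_zero_of_not_mem E hi
    simpa [hei] using hg_le (0, e i)
  refine ContinuousLinearMap.opNorm_le_bound _ hε fun h => ?_
  have hneg := hg_fst (-h)
  rw [show ((-h, 0) : X × (ι → ℝ)) = -(h, 0) by simp, map_neg, norm_neg] at hneg
  have : (φ - ∑ i, (-g (0, e i)) • L i) h = -g (h, 0) := by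
    simp only [sub_apply, sum_apply, smul_apply, smul_eq_mul, neg_mul, Finset.sum_neg_distrib,
      sub_neg_eq_add]
    linarith [hg_decomp h, Finset.sum_congr rfl fun i (_ : i ∈ Finset.univ) =>
      mul_comm (g (0, e i)) (L i h)]
  rw [this, norm_neg, Real.norm_eq_abs, abs_le]
  exact ⟨by linarith, hg_fst h⟩

end ApproximateFarkas

section ConstraintSet

variable {X ι : Type*}

def constraintSet (G : ι → X → ℝ) (E : Set ι) : Set X :=
  {u | ∀ i, (i ∈ E → G i u = 0) ∧ (i ∉ E → 0 ≤ G i u)}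

variable {G : ι → X → ℝ} {E : Set ι} {a : X}

theorem isClosed_constraintSet [TopologicalSpace X] (hG : ∀ i, Continuous (G i)) :
    IsClosed (constraintSet G E) := by
  simp only [constraintSet, ofPred_forall, ofPred_and]
  exact isClosed_iInter fun i =>
    (isClosed_iInter fun _ => isClosed_eq (hG i) continuous_const).inter
      (isClosed_iInter fun _ => isClosed_le continuous_const (hG i))

theorem mem_posTangentConeAt_constraintSet [NormedAddCommGroup X] [NormedSpace ℝ X]
    [CompleteSpace X] [Finite ι]
    (hG : ∀ i, ContDiff ℝ 1 (G i)) (ha : a ∈ constraintSet G E)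
    (hindep : LinearIndependent ℝ fun i : {i // G i a = 0} => fderiv ℝ (G i) a) {h : X}
    (hh : ∀ i, G i a = 0 → (i ∈ E → fderiv ℝ (G i) a h = 0) ∧ (i ∉ E → 0 ≤ fderiv ℝ (G i) a h)) :
    h ∈ posTangentConeAt (constraintSet G E) a := by
  have := Fintype.ofFinite {i // G i a = 0}
  obtain ⟨R, hR⟩ := hindep.exists_rightInverse_pi
  have hΦ : HasStrictFDerivAt (fun x (i : {i // G i a = 0}) => G i x)
      (ContinuousLinearMap.pi fun i => fderiv ℝ (G i) a) a :=
    hasStrictFDerivAt_pi'.2 fun i => (hG i).contDiffAt.hasStrictFDerivAt one_ne_zero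
  obtain ⟨u, rfl, hu, hΦu⟩ := hΦ.exists_curve_map_eq_add_smul hR h
  refine hu.mem_posTangentConeAt ?_
  have hinactive : ∀ᶠ t in 𝓝 0, ∀ i, G i (u 0) ≠ 0 → 0 < G i (u t) := by
    refine eventually_all.2 fun i => ?_
    by_cases hi : G i (u 0) = 0
    · exact .of_forall fun _ h => absurd hi h
    have hpos : 0 < G i (u 0) := ((ha i).2 fun hE => hi ((ha i).1 hE)).lt_of_ne' hi
    filter_upwards [((hG i).continuous.tendsto _).comp hu.continuousAt |>.eventually
      (lt_mem_nhds hpos)] with t ht _ using ht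
  filter_upwards [nhdsWithin_le_nhds (hΦu.and hinactive), self_mem_nhdsWithin]
    with t ⟨hΦt, hpos⟩ (ht : 0 < t) i
  by_cases hi : G i (u 0) = 0
  · have hGt : G i (u t) = t * fderiv ℝ (G i) (u 0) h := by
      simpa [hi] using congrFun hΦt ⟨i, hi⟩
    rw [hGt]
    exact ⟨fun hE => by rw [(hh i hi).1 hE, mul_zero],
      fun hE => mul_nonneg ht.le ((hh i hi).2 hE)⟩
  · exact ⟨fun hE => absurd ((ha i).1 hE) hi, fun _ => (hpos i hi).le⟩

theorem exists_multipliers_of_isLocalMinOn [NormedAddCommGroup X] [NormedSpace ℝ X]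
    [CompleteSpace X] [Fintype ι] (hG : ∀ i, ContDiff ℝ 1 (G i)) (ha : a ∈ constraintSet G E)
    (hindep : LinearIndependent ℝ fun i : {i // G i a = 0} => fderiv ℝ (G i) a)
    {f : X → ℝ} {f' : StrongDual ℝ X} (hf : HasFDerivAt f f' a) {ε : ℝ} (hε : 0 ≤ ε)
    (hmin : IsLocalMinOn (fun v => f v + ε * ‖v - a‖) (constraintSet G E) a) :
    ∃ lam : ι → ℝ, (∀ i ∉ E, 0 ≤ lam i) ∧ (∀ i, G i a ≠ 0 → lam i = 0) ∧
      ‖f' - ∑ i, lam i • fderiv ℝ (G i) a‖ ≤ ε := by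
  classical
  obtain ⟨μ, hμ, hnorm⟩ := exists_nonneg_norm_sub_sum_smul_le (Subtype.val ⁻¹' E) hindep hε
    fun h hE hI => hmin.hasFDerivWithinAt_add_mul_norm_nonneg hf.hasFDerivWithinAt <|
      mem_posTangentConeAt_constraintSet hG ha hindep fun i hi => ⟨hE ⟨i, hi⟩, hI ⟨i, hi⟩⟩
  set lam : ι → ℝ := fun i => if hi : G i a = 0 then μ ⟨i, hi⟩ else 0
  have hsum : ∑ i, lam i • fderiv ℝ (G i) a = ∑ i : {i // G i a = 0}, μ i • fderiv ℝ (G i) a := by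
    rw [← Finset.sum_filter_of_ne (p := fun i => G i a = 0) fun i _ hne => by_contra fun hi =>
      hne (by simp [lam, hi]), Finset.sum_subtype (p := fun i => G i a = 0) _ fun i => by simp]
    exact Finset.sum_congr rfl fun i _ => by simp [lam, i.2]
  refine ⟨lam, fun i hi => ?_, fun i hi => dif_neg hi, hsum ▸ hnorm⟩
  by_cases hi' : G i a = 0
  · simpa [lam, hi'] using hμ ⟨i, hi'⟩ hi
  · simp [lam, hi']

end ConstraintSet

section Symmetrization

variable {α β : Type*} {s : Set α} {g : α → β → α}

theorem List.foldl_mem_and_le_and_eq {γ δ : Type*} [Preorder γ] {f : α → γ} {sy : α → δ}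
    (hg : ∀ a ∈ s, ∀ b, g a b ∈ s ∧ f (g a b) ≤ f a ∧ sy (g a b) = sy a) (l : List β) {a : α}
    (ha : a ∈ s) : l.foldl g a ∈ s ∧ f (l.foldl g a) ≤ f a ∧ sy (l.foldl g a) = sy a := by
  induction l generalizing a with
  | nil => exact ⟨ha, le_rfl, rfl⟩
  | cons b l ih =>
    obtain ⟨hmem, hf, hsy⟩ := ih (hg a ha b).1
    exact ⟨hmem, hf.trans (hg a ha b).2.1, hsy.trans (hg a ha b).2.2⟩

theorem List.foldl_nonexpansive {d : α → α → ℝ} (hs : ∀ a ∈ s, ∀ b, g a b ∈ s)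
    (hd : ∀ a ∈ s, ∀ a' ∈ s, ∀ b, d (g a b) (g a' b) ≤ d a a') (l : List β) {a a' : α}
    (ha : a ∈ s) (ha' : a' ∈ s) : d (l.foldl g a) (l.foldl g a') ≤ d a a' := by
  induction l generalizing a a' with
  | nil => exact le_rfl
  | cons b l ih => exact (ih (hs a ha b) (hs a' ha' b)).trans (hd a ha a' ha' b)

variable {V : Type*} [NormedAddCommGroup V]

theorem norm_sub_le_of_tendsto_foldl {F : α → V} {sy : α → α} (hs : ∀ a ∈ s, ∀ b, g a b ∈ s)
    (hF : ∀ a ∈ s, ∀ a' ∈ s, ∀ b, ‖F (g a b) - F (g a' b)‖ ≤ ‖F a - F a'‖) {Hs : ℕ → β}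
    (hHs : ∀ a ∈ s, Tendsto (fun m => F ((List.range m).map Hs |>.foldl g a)) atTop (𝓝 (F (sy a))))
    {a a' : α} (ha : a ∈ s) (ha' : a' ∈ s) : ‖F (sy a) - F (sy a')‖ ≤ ‖F a - F a'‖ :=
  le_of_tendsto ((hHs a ha).sub (hHs a' ha')).norm <| .of_forall fun _ =>
    List.foldl_nonexpansive (d := fun a a' => ‖F a - F a'‖) hs hF _ ha ha'

theorem norm_sub_sym_le_add {X : Type*} [NormedAddCommGroup X] [NormedSpace ℝ X]
    [NormedSpace ℝ V] (ι : X →L[ℝ] V) {K : ℝ} (hιK : ∀ u, ‖ι u‖ ≤ K * ‖u‖) {S : Set X}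
    {sy Θ : X → X} (hsy : ∀ u ∈ S, ∀ v ∈ S, ‖ι (sy u) - ι (sy v)‖ ≤ ‖ι u - ι v‖)
    {CΘ : ℝ} (hCΘ : 0 ≤ CΘ) (hΘS : ∀ u, Θ u ∈ S)
    (hΘlip : ∀ u v, ‖ι (Θ u) - ι (Θ v)‖ ≤ CΘ * ‖ι u - ι v‖) (hsyext : ∀ u, sy u = sy (Θ u))
    (u w : X) : ‖ι u - ι (sy u)‖ ≤ K * (CΘ + 1) * ‖u - w‖ + ‖ι w - ι (sy w)‖ := by
  have huw : ‖ι u - ι w‖ ≤ K * ‖u - w‖ := by simpa [map_sub] using hιK (u - w)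
  have hsyw : ‖ι (sy w) - ι (sy u)‖ ≤ CΘ * (K * ‖u - w‖) := by
    rw [hsyext w, hsyext u]
    calc _ ≤ ‖ι (Θ w) - ι (Θ u)‖ := hsy _ (hΘS w) _ (hΘS u)
      _ ≤ CΘ * ‖ι w - ι u‖ := hΘlip w u
      _ ≤ CΘ * (K * ‖u - w‖) := by rw [norm_sub_rev]; gcongr
  calc ‖ι u - ι (sy u)‖ = ‖(ι u - ι w) + (ι w - ι (sy w)) + (ι (sy w) - ι (sy u))‖ := by abel_nf
    _ ≤ ‖ι u - ι w‖ + ‖ι w - ι (sy w)‖ + ‖ι (sy w) - ι (sy u)‖ := norm_add₃_le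
    _ ≤ K * (CΘ + 1) * ‖u - w‖ + ‖ι w - ι (sy w)‖ := by nlinarith

end Symmetrization

theorem constrained_symmetric_ekeland_general
    {X : Type*} [NormedAddCommGroup X] [NormedSpace ℝ X] [CompleteSpace X]
    {V : Type*} [NormedAddCommGroup V] [NormedSpace ℝ V]
    (ι : X →L[ℝ] V)
    (K : ℝ) (hK : 0 < K) (hιK : ∀ u : X, ‖ι u‖ ≤ K * ‖u‖)
    (S : Set X)
    {P : Type*}
    (pol : X → P → X) (sy : X → X)
    (hpolS : ∀ u ∈ S, ∀ H : P, pol u H ∈ S)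
    (hsypol : ∀ u ∈ S, ∀ H : P,
      pol (sy u) H = sy u ∧ sy (pol u H) = sy u ∧ pol (pol u H) H = pol u H)
    (happrox : ∃ Hs : ℕ → P, ∀ u ∈ S,
      Filter.Tendsto (fun m => ι (List.foldl pol u ((List.range m).map Hs)))
        Filter.atTop (nhds (ι (sy u))))
    (hpolContr : ∀ u ∈ S, ∀ v ∈ S, ∀ H : P, ‖ι (pol u H) - ι (pol v H)‖ ≤ ‖ι u - ι v‖)
    (Θ : X → X) (CΘ : ℝ) (hCΘ : 0 < CΘ)
    (hΘS : ∀ u : X, Θ u ∈ S)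
    (hΘlip : ∀ u v : X, ‖ι (Θ u) - ι (Θ v)‖ ≤ CΘ * ‖ι u - ι v‖)
    (hsyext : ∀ u : X, sy u = sy (Θ u))
    (m p : ℕ)
    (G : Fin m → X → ℝ) (hG : ∀ i, ContDiff ℝ 1 (G i))
    (𝒞 : Set X)
    (h𝒞 : 𝒞 = {u : X | ∀ i : Fin m, ((i : ℕ) < p → G i u = 0) ∧ ((p ≤ (i : ℕ)) → 0 ≤ G i u)})
    (f : X → ℝ) (hf : Differentiable ℝ f)
    (h𝒞ne : 𝒞.Nonempty) (hfbdd : BddBelow (f '' 𝒞))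
    (hfS : ∀ u ∈ 𝒞, ∃ ξ ∈ 𝒞 ∩ S, f ξ ≤ f u)
    (hindep : ∀ u ∈ 𝒞,
      LinearIndependent ℝ (fun i : {i : Fin m // G i u = 0} => fderiv ℝ (G (i : Fin m)) u))
    (hsymC : ∀ u ∈ 𝒞 ∩ S, ∀ H : P, pol u H ∈ 𝒞 ∧ f (pol u H) ≤ f u) :
    ∀ ε > (0:ℝ), ∃ uε ∈ 𝒞, ∃ lam : Fin m → ℝ,
      (∀ i : Fin m, p ≤ (i : ℕ) → 0 ≤ lam i) ∧
      (∀ i : Fin m, G i uε ≠ 0 → lam i = 0) ∧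
      f uε ≤ sInf (f '' 𝒞) + ε ^ 2 ∧
      ‖ι uε - ι (sy uε)‖ < (K * (CΘ + 1) + 1) * ε ∧
      ‖fderiv ℝ f uε - ∑ i : Fin m, lam i • fderiv ℝ (G i) uε‖ ≤ ε := by
  intro ε hε
  replace h𝒞 : 𝒞 = constraintSet G {i | (i : ℕ) < p} := by simp [h𝒞, constraintSet]
  subst h𝒞
  obtain ⟨Hs, hHs⟩ := happrox
  obtain ⟨_, ⟨u₀, hu₀, rfl⟩, hfu₀⟩ := exists_lt_of_csInf_lt (h𝒞ne.image f)
    (lt_add_of_pos_right _ (pow_pos hε 2))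
  obtain ⟨ξ, ⟨hξ𝒞, hξS⟩, hfξ⟩ := hfS u₀ hu₀
  -- an iterated polarization `w` of `ξ` that is `ε`-close to `ξ* = w*`
  obtain ⟨N, hN⟩ := ((hHs ξ hξS).eventually (ball_mem_nhds _ hε)).exists
  set w := ((List.range N).map Hs).foldl pol ξ
  obtain ⟨⟨hw𝒞, -⟩, hfw, hsyw⟩ := List.foldl_mem_and_le_and_eq (s := _ ∩ S)
    (fun u hu H => ⟨⟨(hsymC u hu H).1, hpolS u hu.2 H⟩, (hsymC u hu H).2, (hsypol u hu.2 H).2.1⟩)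
    ((List.range N).map Hs) ⟨hξ𝒞, hξS⟩
  have hw_sy : ‖ι w - ι (sy w)‖ < ε := by rw [hsyw, ← dist_eq_norm]; exact hN
  obtain ⟨u, hu, hfu, hdist, hmin⟩ := IsClosed.exists_isMinOn_add_mul_dist
    (isClosed_constraintSet fun i => (hG i).continuous)
    hf.continuous.continuousOn.lowerSemicontinuousOn hε hw𝒞 (δ := ε ^ 2)
    fun v hv => by linarith [csInf_le hfbdd (mem_image_of_mem f hv)]
  simp_rw [dist_eq_norm] at hdist hmin
  rw [sq, mul_div_cancel_right₀ _ hε.ne'] at hdist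
  obtain ⟨lam, hlam, hlam0, hnorm⟩ := exists_multipliers_of_isLocalMinOn hG hu (hindep u hu)
    (hf u).hasFDerivAt hε.le hmin.localize
  refine ⟨u, hu, lam, fun i hi => hlam i hi.not_gt, hlam0, by linarith, ?_, hnorm⟩
  have hsy_contr : ∀ u ∈ S, ∀ v ∈ S, ‖ι (sy u) - ι (sy v)‖ ≤ ‖ι u - ι v‖ := fun u hu v hv =>
    norm_sub_le_of_tendsto_foldl hpolS hpolContr hHs hu hv
  calc ‖ι u - ι (sy u)‖ ≤ K * (CΘ + 1) * ‖u - w‖ + ‖ι w - ι (sy w)‖ :=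
        norm_sub_sym_le_add ι hιK hsy_contr hCΘ.le hΘS hΘlip hsyext u w
    _ < K * (CΘ + 1) * ε + ε := add_lt_add_of_le_of_lt (by gcongr) hw_sy
    _ = (K * (CΘ + 1) + 1) * ε := by ring

theorem constrained_symmetric_ekeland
    {X : Type*} [NormedAddCommGroup X] [NormedSpace ℝ X] [CompleteSpace X]
    {V : Type*} [NormedAddCommGroup V] [NormedSpace ℝ V] [CompleteSpace V]
    {W : Type*} [NormedAddCommGroup W] [NormedSpace ℝ W] [CompleteSpace W]
    (ι : X →L[ℝ] V) (κ : V →L[ℝ] W)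
    (K : ℝ) (hK : 0 < K) (hιK : ∀ u : X, ‖ι u‖ ≤ K * ‖u‖)
    (S : Set X)
    {P : Type*} [TopologicalSpace P] [PathConnectedSpace P]
    (pol : X → P → X) (sy : X → X)
    (hpolS : ∀ u ∈ S, ∀ H : P, pol u H ∈ S)
    (hsyS : ∀ u : X, sy u ∈ S)
    (hpolCont : ContinuousOn (fun q : X × P => pol q.1 q.2) (S ×ˢ Set.univ))
    (hsypol : ∀ u ∈ S, ∀ H : P,
      pol (sy u) H = sy u ∧ sy (pol u H) = sy u ∧ pol (pol u H) H = pol u H)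
    (happrox : ∃ Hs : ℕ → P, ∀ u ∈ S,
      Filter.Tendsto (fun m => ι (List.foldl pol u ((List.range m).map Hs)))
        Filter.atTop (nhds (ι (sy u))))
    (hpolContr : ∀ u ∈ S, ∀ v ∈ S, ∀ H : P, ‖ι (pol u H) - ι (pol v H)‖ ≤ ‖ι u - ι v‖)
    (Θ : X → X) (CΘ : ℝ) (hCΘ : 0 < CΘ)
    (hΘS : ∀ u : X, Θ u ∈ S) (hΘid : ∀ u ∈ S, Θ u = u)
    (hΘlip : ∀ u v : X, ‖ι (Θ u) - ι (Θ v)‖ ≤ CΘ * ‖ι u - ι v‖)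
    (hpolext : ∀ u : X, ∀ H : P, pol u H = pol (Θ u) H)
    (hsyext : ∀ u : X, sy u = sy (Θ u))
    (m p : ℕ) (hp1 : 1 ≤ p) (hpm : p ≤ m)
    (G : Fin m → X → ℝ) (hG : ∀ i, ContDiff ℝ 1 (G i))
    (𝒞 : Set X)
    (h𝒞 : 𝒞 = {u : X | ∀ i : Fin m, ((i : ℕ) < p → G i u = 0) ∧ ((p ≤ (i : ℕ)) → 0 ≤ G i u)})
    (f : X → ℝ) (hf : Differentiable ℝ f)
    (h𝒞ne : 𝒞.Nonempty) (hfbdd : BddBelow (f '' 𝒞))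
    (hfS : ∀ u ∈ 𝒞, ∃ ξ ∈ 𝒞 ∩ S, f ξ ≤ f u)
    (hindep : ∀ u ∈ 𝒞,
      LinearIndependent ℝ (fun i : {i : Fin m // G i u = 0} => fderiv ℝ (G (i : Fin m)) u))
    (hsymC : ∀ u ∈ 𝒞 ∩ S, ∀ H : P, pol u H ∈ 𝒞 ∧ f (pol u H) ≤ f u) :
    ∀ ε > (0:ℝ), ∃ uε ∈ 𝒞, ∃ lam : Fin m → ℝ,
      (∀ i : Fin m, p ≤ (i : ℕ) → 0 ≤ lam i) ∧
      (∀ i : Fin m, G i uε ≠ 0 → lam i = 0) ∧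
      f uε ≤ sInf (f '' 𝒞) + ε ^ 2 ∧
      ‖ι uε - ι (sy uε)‖ < (K * (CΘ + 1) + 1) * ε ∧
      ‖fderiv ℝ f uε - ∑ i : Fin m, lam i • fderiv ℝ (G i) uε‖ ≤ ε :=
  constrained_symmetric_ekeland_general ι K hK hιK S pol sy hpolS hsypol happrox hpolContr Θ CΘ hCΘ
    hΘS hΘlip hsyext m p G hG 𝒞 h𝒞 f hf h𝒞ne hfbdd hfS hindep hsymC
end

section
/- Symmetric mountain-pass (inf-sup) principle. In the abstract symmetrization framework, assume additionally that Θ : (X,‖·‖) → (S,‖·‖) is continuous, that the extended polarization and symmetrization fix the origin (0^H = 0 for all H ∈ ℋ* and 0* = 0), and let ψ ∈ S satisfy ψ^H = ψ for all H ∈ ℋ*. Let f : X → ℝ be of class C¹ with f(u^H) ≤ f(u) for all u ∈ X and all H ∈ ℋ*. Let Ŝ := {γ ∈ C([0,1], X) : γ(0) = 0, γ(1) = ψ} and c := inf_{γ ∈ Ŝ} max_{t ∈ [0,1]} f(γ(t)), and assume c > max{f(0), f(ψ)}. Then for every ε > 0 there exists u_ε ∈ X such that ‖u_ε − u_ε*‖_V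 < ε, ‖df(u_ε)‖_{X'} ≤ ε, and c ≤ f(u_ε) ≤ c + ε. -/
/-!
Take a path `γ₀` from `0` to `ψ` with `max f ∘ γ₀` close to `c`. Polarizing it along
`H₀, …, H_{m-1}` does not raise `f` and keeps the endpoints; since the iterated polarizations are
nonexpansive in `V`, they are equicontinuous along the compact path, so they converge to the
symmetrization uniformly on it, and for large `m` the polarized path `Γ` is almost symmetric at
every point. Ekeland's principle for `γ ↦ max f ∘ γ` on the complete space of paths from `0`
to `ψ` gives a path `γ` close to `Γ` that no competitor beats by more than `σ` times the
distance; deforming `γ` along a pseudo-gradient field then shows that `‖df‖` is small at some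
maximum point `t` of `f ∘ γ`. Finally `γ t` is almost symmetric because it is close to `Γ t`
and `u ↦ u*` is Lipschitz into `V`.
-/

open Filter Topology Metric Set

theorem IsCompact.eventually_forall_lt {Y T : Type*} [TopologicalSpace Y] [TopologicalSpace T]
    {K : Set T} (hK : IsCompact K) {F G : Y → T → ℝ} (hF : Continuous (Function.uncurry F))
    (hG : Continuous (Function.uncurry G)) {y₀ : Y} (h : ∀ t ∈ K, F y₀ t < G y₀ t) :
    ∀ᶠ y in 𝓝 y₀, ∀ t ∈ K, F y t < G y t :=
  hK.eventually_forall_of_forall_eventually fun t ht =>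
    hF.continuousAt.eventually_lt hG.continuousAt (h t ht)

section Ekeland

variable {α : Type*} [MetricSpace α] {A : Set α} {Φ : α → ℝ} {σ : ℝ} {x y : α}

def descentSet (A : Set α) (Φ : α → ℝ) (σ : ℝ) (x : α) : Set α :=
  {y ∈ A | Φ y + σ * dist x y ≤ Φ x}

theorem self_mem_descentSet (hx : x ∈ A) : x ∈ descentSet A Φ σ x :=
  ⟨hx, by simp⟩

theorem descentSet_subset (hσ : 0 ≤ σ) (hy : y ∈ descentSet A Φ σ x) :
    descentSet A Φ σ y ⊆ descentSet A Φ σ x := fun z hz =>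
  ⟨hz.1, by nlinarith [hy.2, hz.2, dist_triangle x y z]⟩

theorem isClosed_descentSet (hA : IsClosed A) (hΦ : LowerSemicontinuous Φ) (x : α) :
    IsClosed (descentSet A Φ σ x) :=
  hA.inter <| (hΦ.add ((continuous_const.mul (continuous_const.dist continuous_id))
    |>.lowerSemicontinuous)).isClosed_preimage (Φ x)

theorem exists_mem_descentSet_forall_dist_le (hσ : 0 < σ) (hbdd : BddBelow (Φ '' A))
    (hx : x ∈ A) {ε : ℝ} (hε : 0 < ε) :
    ∃ y ∈ descentSet A Φ σ x, ∀ z ∈ descentSet A Φ σ y, ∀ z' ∈ descentSet A Φ σ y,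
      dist z z' ≤ ε := by
  obtain ⟨_, ⟨y, hy, rfl⟩, hy_lt⟩ := Real.lt_sInf_add_pos
    (Set.Nonempty.image Φ ⟨x, self_mem_descentSet hx⟩)
    (half_pos (mul_pos hσ hε))
  have hclose : ∀ z ∈ descentSet A Φ σ y, σ * dist y z ≤ σ * (ε / 2) := fun z hz => by
    have : sInf (Φ '' descentSet A Φ σ x) ≤ Φ z :=
      csInf_le (hbdd.mono (image_mono fun _ h => h.1))
        ⟨z, descentSet_subset hσ.le hy hz, rfl⟩
    linarith [hz.2]
  refine ⟨y, hy, fun z hz z' hz' => ?_⟩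
  have h := le_of_mul_le_mul_left (hclose z hz) hσ
  have h' := le_of_mul_le_mul_left (hclose z' hz') hσ
  linarith [dist_triangle_left z z' y]

theorem exists_ekeland_point [CompleteSpace α] (hA : IsClosed A) (hΦ : LowerSemicontinuous Φ)
    (hbdd : BddBelow (Φ '' A)) (hσ : 0 < σ) {x₀ : α} (hx₀ : x₀ ∈ A) :
    ∃ z ∈ A, σ * dist x₀ z ≤ Φ x₀ - Φ z ∧ ∀ y ∈ A, Φ z ≤ Φ y + σ * dist z y := by
  choose! next hnext hsmall using fun (x : α) (hx : x ∈ A) (n : ℕ) =>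
    exists_mem_descentSet_forall_dist_le hσ hbdd hx (ε := (1 / 2) ^ n) (by positivity)
  let x : ℕ → α := fun n => Nat.rec x₀ (fun n y => next y n) n
  have hxA : ∀ n, x n ∈ A := by
    intro n
    induction n with
    | zero => exact hx₀
    | succ n ih => exact (hnext (x n) ih n).1
  set s : ℕ → Set α := fun n => descentSet A Φ σ (x (n + 1))
  have hs_anti : Antitone s := antitone_nat_of_succ_le fun n =>
    descentSet_subset hσ.le (hnext _ (hxA (n + 1)) (n + 1))
  have hs_diam : ∀ n, ∀ y ∈ s n, ∀ y' ∈ s n, dist y y' ≤ (1 / 2) ^ n := fun n =>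
    hsmall (x n) (hxA n) n
  have hs_bdd : ∀ n, Bornology.IsBounded (s n) := fun n => isBounded_iff.2 ⟨_, hs_diam n⟩
  have hdiam : Tendsto (fun n => diam (s n)) atTop (𝓝 0) :=
    squeeze_zero (fun _ => diam_nonneg)
      (fun n => diam_le_of_forall_dist_le (by positivity) (hs_diam n))
      (tendsto_pow_atTop_nhds_zero_of_lt_one (by norm_num) (by norm_num))
  obtain ⟨z, hz⟩ := nonempty_iInter_of_nonempty_biInter
    (fun n => isClosed_descentSet hA hΦ _) hs_bdd
    (fun N => ⟨x (N + 1), mem_iInter₂.2 fun n hn =>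
      hs_anti hn (self_mem_descentSet (hxA (N + 1)))⟩) hdiam
  rw [mem_iInter] at hz
  have hz₀ : z ∈ descentSet A Φ σ x₀ :=
    descentSet_subset hσ.le (hnext x₀ hx₀ 0) (hz 0)
  refine ⟨z, hz₀.1, by linarith [hz₀.2], fun y hy => ?_⟩
  by_contra! hlt
  have hy_mem : ∀ n, y ∈ s n := fun n =>
    descentSet_subset hσ.le (hz n) ⟨hy, hlt.le⟩
  have hzy : dist z y = 0 := le_antisymm
    (ge_of_tendsto' hdiam fun n => dist_le_diam_of_mem (hs_bdd n) (hz n) (hy_mem n))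
    dist_nonneg
  rw [dist_eq_zero] at hzy
  subst hzy
  simp at hlt

end Ekeland

section SupAlong

variable {T Y : Type*} [TopologicalSpace T] [TopologicalSpace Y] {f : Y → ℝ}

noncomputable def supAlong (f : Y → ℝ) (γ : C(T, Y)) : ℝ := ⨆ t, f (γ t)

theorem supAlong_le [Nonempty T] {γ : C(T, Y)} {b : ℝ} (h : ∀ t, f (γ t) ≤ b) :
    supAlong f γ ≤ b :=
  ciSup_le h

variable [CompactSpace T]

theorem bddAbove_range_comp (hf : Continuous f) (γ : C(T, Y)) :
    BddAbove (range fun t => f (γ t)) :=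
  (isCompact_range (hf.comp γ.continuous)).bddAbove

theorem le_supAlong (hf : Continuous f) (γ : C(T, Y)) (t : T) : f (γ t) ≤ supAlong f γ :=
  le_ciSup (bddAbove_range_comp hf γ) t

theorem lowerSemicontinuous_supAlong (hf : Continuous f) :
    LowerSemicontinuous (supAlong f : C(T, Y) → ℝ) :=
  lowerSemicontinuous_ciSup (bddAbove_range_comp hf) fun t =>
    (hf.comp (continuous_eval_const t)).lowerSemicontinuous

end SupAlong

section Deformation

variable {X : Type*} [NormedAddCommGroup X] [NormedSpace ℝ X]

theorem ContinuousLinearMap.exists_norm_le_one_apply_lt_neg (ℓ : X →L[ℝ] ℝ) {σ : ℝ}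
    (hσ : σ < ‖ℓ‖) : ∃ v : X, ‖v‖ ≤ 1 ∧ ℓ v < -σ := by
  obtain ⟨v, hv, hσv⟩ := ℓ.exists_lt_apply_of_lt_opNorm hσ
  rcases lt_abs.1 (Real.norm_eq_abs _ ▸ hσv) with h | h
  · exact ⟨-v, by rw [norm_neg]; exact hv.le, by rw [map_neg]; linarith⟩
  · exact ⟨v, hv.le, by linarith⟩

theorem apply_add_smul_le_of_fderiv_lt {f : X → ℝ} (hf : Differentiable ℝ f) {x v : X}
    (hv : ‖v‖ ≤ 1) {ρ σ s : ℝ} (hs : 0 ≤ s) (hsρ : s < ρ)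
    (hdesc : ∀ w : X, ‖w‖ < ρ → fderiv ℝ f (x + w) v < -σ) :
    f (x + s • v) ≤ f x - σ * s := by
  have hderiv : ∀ τ : ℝ, HasDerivAt (fun τ => f (x + τ • v)) (fderiv ℝ f (x + τ • v) v) τ :=
    fun τ => (hf _).hasFDerivAt.comp_hasDerivAt τ
      (by simpa using ((hasDerivAt_id τ).smul_const v).const_add x)
  have hg : Differentiable ℝ fun τ : ℝ => f (x + τ • v) := fun τ => (hderiv τ).differentiableAt
  have hslope : ∀ τ ∈ interior (Icc 0 s), deriv (fun τ => f (x + τ • v)) τ ≤ -σ := by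
    intro τ hτ
    rw [interior_Icc] at hτ
    refine (hderiv τ).deriv ▸ (hdesc _ ?_).le
    rw [norm_smul, Real.norm_of_nonneg hτ.1.le]
    nlinarith [hτ.2, norm_nonneg v]
  have := (convex_Icc 0 s).image_sub_le_mul_sub_of_deriv_le hg.continuous.continuousOn
    hg.differentiableOn hslope 0 (left_mem_Icc.2 hs) s (right_mem_Icc.2 hs) hs
  simp only [zero_smul, add_zero, sub_zero] at this
  linarith

variable {T : Type*} [TopologicalSpace T] [CompactSpace T] {f : X → ℝ}

theorem exists_descent_field [T2Space T] (hf : ContDiff ℝ 1 f) (γ : C(T, X)) {N E : Set T}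
    (hN : IsClosed N) (hE : IsClosed E) (hNE : Disjoint N E) {σ : ℝ}
    (hσ : ∀ t ∈ N, σ < ‖fderiv ℝ f (γ t)‖) :
    ∃ h : C(T, X), (∀ t, ‖h t‖ ≤ 1) ∧ (∀ t ∈ E, h t = 0) ∧
      ∃ ρ > 0, ∀ t ∈ N, ∀ w : X, ‖w‖ < ρ → fderiv ℝ f (γ t + w) (h t) < -σ := by
  obtain ⟨h, hh⟩ := exists_continuous_forall_mem_convex_of_local_const
    (t := fun t => {v : X | ‖v‖ ≤ 1 ∧ (t ∈ N → fderiv ℝ f (γ t) v < -σ) ∧ (t ∈ E → v = 0)})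
    (fun t => by
      by_cases htN : t ∈ N
      · convert (convex_closedBall (0 : X) 1).inter
          (convex_halfSpace_lt (fderiv ℝ f (γ t)).isLinear (-σ)) using 1
        ext v
        simp [htN, hNE.notMem_of_mem_left htN]
      · by_cases htE : t ∈ E
        · convert convex_singleton (0 : X) using 1
          ext v
          simp +contextual [htN, htE]
        · convert convex_closedBall (0 : X) 1 using 1
          ext v
          simp [htN, htE])
    (fun t₀ => by
      by_cases ht₀ : t₀ ∈ N
      · obtain ⟨v, hv, hv_lt⟩ :=
          (fderiv ℝ f (γ t₀)).exists_norm_le_one_apply_lt_neg (hσ t₀ ht₀)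
        have hopen : IsOpen {t | fderiv ℝ f (γ t) v < -σ} :=
          isOpen_lt (((hf.continuous_fderiv one_ne_zero).comp γ.continuous).clm_apply
            continuous_const) continuous_const
        exact ⟨v, eventually_of_mem
          ((hopen.inter hE.isOpen_compl).mem_nhds ⟨hv_lt, hNE.notMem_of_mem_left ht₀⟩)
          fun t ht => ⟨hv, fun _ => ht.1, fun htE => absurd htE ht.2⟩⟩
      · exact ⟨0, eventually_of_mem (hN.isOpen_compl.mem_nhds ht₀) fun t ht =>
          ⟨by simp, fun htN => absurd htN ht, fun _ => rfl⟩⟩)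
  refine ⟨h, fun t => (hh t).1, fun t ht => (hh t).2.2 ht, ?_⟩
  have hdescent := hN.isCompact.eventually_forall_lt
    (F := fun w t => fderiv ℝ f (γ t + w) (h t)) (G := fun _ _ => -σ)
    (((hf.continuous_fderiv one_ne_zero).comp ((γ.continuous.comp continuous_snd).add
      continuous_fst)).clm_apply (h.continuous.comp continuous_snd)) continuous_const
    (y₀ := 0) fun t ht => by simpa using (hh t).2.1 ht
  obtain ⟨ρ, hρ, hball⟩ := Metric.eventually_nhds_iff.1 hdescent
  exact ⟨ρ, hρ, fun t ht w hw => hball (by simpa using hw) t ht⟩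

theorem exists_deformation_supAlong_le [Nonempty T] [T2Space T] (hf : ContDiff ℝ 1 f)
    {E : Set T} (hE : IsClosed E) (γ : C(T, X)) {σ : ℝ}
    (hE_lt : ∀ t ∈ E, f (γ t) < supAlong f γ)
    (hcrit : ∀ t, f (γ t) = supAlong f γ → σ < ‖fderiv ℝ f (γ t)‖) :
    ∃ s > 0, ∃ γ' : C(T, X), EqOn γ' γ E ∧ dist γ γ' ≤ s ∧
      supAlong f γ' ≤ supAlong f γ - σ * s := by
  set Φ := supAlong f γ
  have hfγ : Continuous fun t => f (γ t) := hf.continuous.comp γ.continuous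
  set C := {t | ‖fderiv ℝ f (γ t)‖ ≤ σ} ∪ E
  have hC : IsClosed C := (isClosed_le
    ((hf.continuous_fderiv one_ne_zero).comp γ.continuous).norm continuous_const).union hE
  have hC_lt : ∀ t ∈ C, f (γ t) < Φ := by
    rintro t (ht | ht)
    · exact (le_supAlong hf.continuous γ t).lt_of_ne fun heq => (hcrit t heq).not_ge ht
    · exact hE_lt t ht
  obtain ⟨β, hβ, hCβ⟩ := (hC.isCompact.eventually_forall_lt (F := fun _ t => f (γ t))
    (G := fun β _ => Φ - β) (hfγ.comp continuous_snd) (continuous_const.sub continuous_fst)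
    (y₀ := 0) (by simpa using hC_lt)).exists_gt
  -- `h` lowers `f` on the near-maximal set `N`; off `N`, `f ∘ γ` stays `β` below `Φ`.
  set N := {t | Φ - β ≤ f (γ t)}
  have hNE : Disjoint N E :=
    disjoint_left.2 fun t htN htE => (hCβ t (Or.inr htE)).not_ge htN
  have hNσ : ∀ t ∈ N, σ < ‖fderiv ℝ f (γ t)‖ :=
    fun t htN => not_le.1 fun h => (hCβ t (Or.inl h)).not_ge htN
  obtain ⟨h, hh_norm, hh_E, ρ, hρ, hh_desc⟩ :=
    exists_descent_field hf γ (isClosed_le continuous_const hfγ) hE hNE hNσ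
  have hclose := isCompact_univ.eventually_forall_lt (F := fun (s : ℝ) t => f (γ t + s • h t))
    (G := fun _ t => f (γ t) + β / 2) (by fun_prop) (by fun_prop) (y₀ := 0)
    (by simp [half_pos hβ])
  have hσs : ∀ᶠ s in 𝓝 (0 : ℝ), σ * s < β / 2 :=
    ((continuous_const.mul continuous_id).tendsto' 0 0 (by simp)).eventually
      (gt_mem_nhds (half_pos hβ))
  obtain ⟨s, hs, hs_close, hs_ρ, hs_β⟩ := (hclose.and ((gt_mem_nhds hρ).and hσs)).exists_gt
  refine ⟨s, hs, ⟨fun t => γ t + s • h t, by fun_prop⟩, fun t ht => by simp [hh_E t ht],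
    (ContinuousMap.dist_le hs.le).2 fun t => ?_, supAlong_le fun t => ?_⟩
  · simpa [dist_eq_norm, norm_smul, abs_of_pos hs] using
      mul_le_of_le_one_right hs.le (hh_norm t)
  · show f (γ t + s • h t) ≤ Φ - σ * s
    by_cases htN : t ∈ N
    · linarith [le_supAlong hf.continuous γ t, apply_add_smul_le_of_fderiv_lt
        (hf.differentiable one_ne_zero) (hh_norm t) hs.le hs_ρ (hh_desc t htN)]
    · simp only [N, mem_ofPred_eq, not_le] at htN
      linarith [hs_close t (mem_univ t)]

theorem exists_almost_critical_of_ekeland [Nonempty T] [T2Space T] (hf : ContDiff ℝ 1 f)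
    {E : Set T} (hE : IsClosed E) {γ : C(T, X)} {σ σ' : ℝ} (hσ : 0 ≤ σ) (hσσ' : σ < σ')
    (hEk : ∀ γ' : C(T, X), EqOn γ' γ E → supAlong f γ ≤ supAlong f γ' + σ * dist γ γ')
    (hE_lt : ∀ t ∈ E, f (γ t) < supAlong f γ) :
    ∃ t, f (γ t) = supAlong f γ ∧ ‖fderiv ℝ f (γ t)‖ ≤ σ' := by
  by_contra! hcrit
  obtain ⟨s, hs, γ', hγ'E, hdist, hsup⟩ := exists_deformation_supAlong_le hf hE γ hE_lt hcrit
  nlinarith [hEk γ' hγ'E, mul_le_mul_of_nonneg_left hdist hσ]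

end Deformation

section Polarization

variable {X P V : Type*} [SeminormedAddCommGroup V] (ι : X → V) {S : Set X} {pol : X → P → X}
  {sy : X → X} {Hs : ℕ → P}

theorem norm_foldl_pol_sub_le (hpolS : ∀ u ∈ S, ∀ H, pol u H ∈ S)
    (hpolContr : ∀ u ∈ S, ∀ v ∈ S, ∀ H, ‖ι (pol u H) - ι (pol v H)‖ ≤ ‖ι u - ι v‖)
    (l : List P) {u v : X} (hu : u ∈ S) (hv : v ∈ S) :
    ‖ι (l.foldl pol u) - ι (l.foldl pol v)‖ ≤ ‖ι u - ι v‖ := by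
  induction l generalizing u v with
  | nil => exact le_rfl
  | cons H l ih => exact (ih (hpolS u hu H) (hpolS v hv H)).trans (hpolContr u hu v hv H)

theorem sy_foldl_pol (hpolS : ∀ u ∈ S, ∀ H, pol u H ∈ S)
    (hsypol : ∀ u ∈ S, ∀ H, sy (pol u H) = sy u) (l : List P) {u : X} (hu : u ∈ S) :
    sy (l.foldl pol u) = sy u := by
  induction l generalizing u with
  | nil => rfl
  | cons H l ih => exact (ih (hpolS u hu H)).trans (hsypol u hu H)

theorem apply_foldl_pol_le {f : X → ℝ} (hf : ∀ u H, f (pol u H) ≤ f u) (l : List P) (u : X) :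
    f (l.foldl pol u) ≤ f u := by
  induction l generalizing u with
  | nil => exact le_rfl
  | cons H l ih => exact (ih (pol u H)).trans (hf u H)

theorem continuous_foldl_pol [TopologicalSpace X] [TopologicalSpace P] {T : Type*}
    [TopologicalSpace T] (hpolS : ∀ u ∈ S, ∀ H, pol u H ∈ S)
    (hpolCont : ContinuousOn (fun q : X × P => pol q.1 q.2) (S ×ˢ univ)) (l : List P)
    {b : T → X} (hb : Continuous b) (hbS : ∀ t, b t ∈ S) :
    Continuous fun t => l.foldl pol (b t) := by
  induction l generalizing b with
  | nil => exact hb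
  | cons H l ih =>
    exact ih (hpolCont.comp_continuous (hb.prodMk continuous_const) fun t => ⟨hbS t, trivial⟩)
      fun t => hpolS _ (hbS t) H

theorem norm_sy_sub_sy_le (hpolS : ∀ u ∈ S, ∀ H, pol u H ∈ S)
    (hpolContr : ∀ u ∈ S, ∀ v ∈ S, ∀ H, ‖ι (pol u H) - ι (pol v H)‖ ≤ ‖ι u - ι v‖)
    (hHs : ∀ u ∈ S, Tendsto (fun m => ι (((List.range m).map Hs).foldl pol u)) atTop
      (𝓝 (ι (sy u))))
    {u v : X} (hu : u ∈ S) (hv : v ∈ S) :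
    ‖ι (sy u) - ι (sy v)‖ ≤ ‖ι u - ι v‖ :=
  le_of_tendsto ((hHs u hu).sub (hHs v hv)).norm <| Eventually.of_forall fun _ =>
    norm_foldl_pol_sub_le ι hpolS hpolContr _ hu hv

theorem tendstoUniformly_foldl_pol [TopologicalSpace X] {T : Type*} [TopologicalSpace T]
    [CompactSpace T] (hpolS : ∀ u ∈ S, ∀ H, pol u H ∈ S)
    (hpolContr : ∀ u ∈ S, ∀ v ∈ S, ∀ H, ‖ι (pol u H) - ι (pol v H)‖ ≤ ‖ι u - ι v‖)
    (hHs : ∀ u ∈ S, Tendsto (fun m => ι (((List.range m).map Hs).foldl pol u)) atTop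
      (𝓝 (ι (sy u))))
    (hι : Continuous ι) {b : T → X} (hb : Continuous b) (hbS : ∀ t, b t ∈ S) :
    TendstoUniformly (fun m t => ι (((List.range m).map Hs).foldl pol (b t)))
      (fun t => ι (sy (b t))) atTop := by
  have hequi : Equicontinuous fun m t => ι (((List.range m).map Hs).foldl pol (b t)) :=
    fun t₀ => equicontinuousAt_of_continuity_modulus (fun t => dist (ι (b t₀)) (ι (b t)))
      ((continuous_const.dist (hι.comp hb)).tendsto' t₀ 0 (dist_self _)) _
      (Eventually.of_forall fun t m => by
        simpa only [dist_eq_norm] using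
          norm_foldl_pol_sub_le ι hpolS hpolContr _ (hbS t₀) (hbS t))
  exact UniformFun.tendsto_iff_tendstoUniformly.1
    ((hequi.tendsto_uniformFun_iff_pi _ _).2 (tendsto_pi_nhds.2 fun t => hHs _ (hbS t)))

theorem norm_sy_sub_sy_le_mul {Θ : X → X} {CΘ : ℝ} (hpolS : ∀ u ∈ S, ∀ H, pol u H ∈ S)
    (hpolContr : ∀ u ∈ S, ∀ v ∈ S, ∀ H, ‖ι (pol u H) - ι (pol v H)‖ ≤ ‖ι u - ι v‖)
    (hHs : ∀ u ∈ S, Tendsto (fun m => ι (((List.range m).map Hs).foldl pol u)) atTop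
      (𝓝 (ι (sy u))))
    (hΘS : ∀ u, Θ u ∈ S) (hΘlip : ∀ u v, ‖ι (Θ u) - ι (Θ v)‖ ≤ CΘ * ‖ι u - ι v‖)
    (hsyext : ∀ u, sy u = sy (Θ u)) (u v : X) :
    ‖ι (sy u) - ι (sy v)‖ ≤ CΘ * ‖ι u - ι v‖ :=
  calc ‖ι (sy u) - ι (sy v)‖ = ‖ι (sy (Θ u)) - ι (sy (Θ v))‖ := by rw [← hsyext, ← hsyext]
    _ ≤ ‖ι (Θ u) - ι (Θ v)‖ := norm_sy_sub_sy_le ι hpolS hpolContr hHs (hΘS u) (hΘS v)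
    _ ≤ CΘ * ‖ι u - ι v‖ := hΘlip u v

theorem norm_sub_sy_le [SeminormedAddCommGroup X] {K CΘ : ℝ} (hCΘ : 0 ≤ CΘ)
    (hι : ∀ u v, ‖ι u - ι v‖ ≤ K * ‖u - v‖)
    (hsy : ∀ u v, ‖ι (sy u) - ι (sy v)‖ ≤ CΘ * ‖ι u - ι v‖) (u w : X) :
    ‖ι u - ι (sy u)‖ ≤ ‖ι w - ι (sy w)‖ + (1 + CΘ) * K * ‖u - w‖ := by
  have h₁ := hι u w
  have h₂ := (hsy w u).trans (mul_le_mul_of_nonneg_left (hι w u) hCΘ)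
  calc ‖ι u - ι (sy u)‖
      = ‖(ι u - ι w) + (ι w - ι (sy w)) + (ι (sy w) - ι (sy u))‖ := by abel_nf
    _ ≤ ‖ι u - ι w‖ + ‖ι w - ι (sy w)‖ + ‖ι (sy w) - ι (sy u)‖ := norm_add₃_le
    _ ≤ ‖ι w - ι (sy w)‖ + (1 + CΘ) * K * ‖u - w‖ := by
      rw [norm_sub_rev w u] at h₂
      linarith

theorem exists_polarized_near_symmetric [TopologicalSpace X] [TopologicalSpace P]
    {T : Type*} [TopologicalSpace T] [CompactSpace T] {Θ : X → X} {f : X → ℝ}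
    (hpolS : ∀ u ∈ S, ∀ H, pol u H ∈ S)
    (hpolCont : ContinuousOn (fun q : X × P => pol q.1 q.2) (S ×ˢ univ))
    (hsypol : ∀ u ∈ S, ∀ H, sy (pol u H) = sy u)
    (hpolContr : ∀ u ∈ S, ∀ v ∈ S, ∀ H, ‖ι (pol u H) - ι (pol v H)‖ ≤ ‖ι u - ι v‖)
    (hHs : ∀ u ∈ S, Tendsto (fun m => ι (((List.range m).map Hs).foldl pol u)) atTop
      (𝓝 (ι (sy u))))
    (hι : Continuous ι) (hΘS : ∀ u, Θ u ∈ S) (hΘ : Continuous Θ)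
    (hpolext : ∀ u H, pol u H = pol (Θ u) H) (hfpol : ∀ u H, f (pol u H) ≤ f u)
    (γ : C(T, X)) {η : ℝ} (hη : 0 < η) :
    ∃ Γ : C(T, X), (∀ t, (∀ H, pol (γ t) H = γ t) → Γ t = γ t) ∧ (∀ t, f (Γ t) ≤ f (γ t)) ∧
      ∀ t, ‖ι (Γ t) - ι (sy (Γ t))‖ < η := by
  have hb : Continuous fun t => Θ (γ t) := hΘ.comp γ.continuous
  obtain ⟨m, hm, hunif⟩ := ((eventually_gt_atTop 0).and (tendstoUniformly_iff.1
    (tendstoUniformly_foldl_pol ι hpolS hpolContr hHs hι hb fun t => hΘS _) η hη)).exists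
  -- the first polarization absorbs `Θ`, which is why `m ≥ 1`
  obtain ⟨k, rfl⟩ : ∃ k, m = k + 1 := Nat.exists_eq_add_one.2 hm
  set L := (List.range (k + 1)).map Hs
  have hΘfold : ∀ u, L.foldl pol (Θ u) = L.foldl pol u := fun u => by
    simp only [L, List.range_succ_eq_map, List.map_cons, List.foldl_cons, ← hpolext]
  refine ⟨⟨fun t => L.foldl pol (Θ (γ t)),
    continuous_foldl_pol hpolS hpolCont L hb fun t => hΘS _⟩, fun t ht => ?_, fun t => ?_,
    fun t => ?_⟩
  · simpa only [ContinuousMap.coe_mk, hΘfold] using List.foldl_fixed' ht L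
  · simpa only [ContinuousMap.coe_mk, hΘfold] using apply_foldl_pol_le hfpol L (γ t)
  · rw [ContinuousMap.coe_mk, sy_foldl_pol hpolS hsypol L (hΘS _), norm_sub_rev,
      ← dist_eq_norm]
    exact hunif t

end Polarization

open unitInterval in
theorem setOf_sSup_image_path_eq {X : Type*} [TopologicalSpace X] (f : X → ℝ) (a b : X) :
    {r : ℝ | ∃ γ : ℝ → X, ContinuousOn γ (Icc 0 1) ∧ γ 0 = a ∧ γ 1 = b ∧
      r = sSup (f '' (γ '' Icc 0 1))} = supAlong f '' {γ : C(I, X) | γ 0 = a ∧ γ 1 = b} := by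
  ext r
  constructor
  · rintro ⟨γ, hγ, h0, h1, rfl⟩
    refine ⟨⟨(Icc 0 1).domRestrict γ, hγ.domRestrict⟩, ⟨h0, h1⟩, ?_⟩
    rw [image_image, image_eq_range]
    rfl
  · rintro ⟨γ, ⟨h0, h1⟩, rfl⟩
    refine ⟨IccExtend zero_le_one γ, γ.continuous.Icc_extend'.continuousOn,
      (IccExtend_left _ _).trans h0, (IccExtend_right _ _).trans h1, ?_⟩
    rw [image_image, image_eq_range]
    simp only [supAlong, iSup, IccExtend_val]

theorem exists_almost_critical_near_path {X : Type*} [NormedAddCommGroup X] [NormedSpace ℝ X]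
    [CompleteSpace X] {f : X → ℝ} (hf : ContDiff ℝ 1 f) {a b : X} {c : ℝ}
    (hc : ∀ γ : C(unitInterval, X), γ 0 = a → γ 1 = b → c ≤ supAlong f γ)
    (hab : max (f a) (f b) < c) {Γ : C(unitInterval, X)} (hΓ0 : Γ 0 = a) (hΓ1 : Γ 1 = b)
    {σ σ' r : ℝ} (hσ : 0 < σ) (hσσ' : σ < σ')
    (hΓc : supAlong f Γ < c + σ * r) :
    ∃ t, ∃ u, ‖u - Γ t‖ < r ∧ ‖fderiv ℝ f u‖ ≤ σ' ∧ c ≤ f u ∧ f u ≤ supAlong f Γ := by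
  obtain ⟨γ, ⟨hγ0, hγ1⟩, hdist, hEk⟩ := exists_ekeland_point
    ((isClosed_eq (continuous_eval_const 0) continuous_const).inter
      (isClosed_eq (continuous_eval_const 1) continuous_const))
    (lowerSemicontinuous_supAlong hf.continuous)
    ⟨c, forall_mem_image.2 fun γ hγ => hc γ hγ.1 hγ.2⟩ hσ (x₀ := Γ) ⟨hΓ0, hΓ1⟩
  have hcγ := hc γ hγ0 hγ1
  obtain ⟨t, hmax, hderiv⟩ := exists_almost_critical_of_ekeland hf (E := {0, 1})
    (Set.toFinite _).isClosed hσ.le hσσ'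
    (fun γ' hγ' => hEk γ' ⟨(hγ' (by simp)).trans hγ0, (hγ' (by simp)).trans hγ1⟩)
    (by
      rintro _ (rfl | rfl)
      · rw [hγ0]; exact (max_lt_iff.1 hab).1.trans_le hcγ
      · rw [hγ1]; exact (max_lt_iff.1 hab).2.trans_le hcγ)
  have hdist_nonneg : 0 ≤ σ * dist Γ γ := mul_nonneg hσ.le dist_nonneg
  refine ⟨t, γ t, ?_, hderiv, hmax ▸ hcγ, by linarith⟩
  calc ‖γ t - Γ t‖ ≤ dist γ Γ := by rw [← dist_eq_norm]; exact ContinuousMap.dist_apply_le_dist t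
    _ < r := by rw [dist_comm]; exact lt_of_mul_lt_mul_left (by linarith) hσ.le

theorem symmetric_mountain_pass_general
    {X : Type*} [NormedAddCommGroup X] [NormedSpace ℝ X] [CompleteSpace X]
    {V : Type*} [NormedAddCommGroup V] [NormedSpace ℝ V]
    (ι : X →L[ℝ] V)
    (K : ℝ) (hK : 0 < K) (hιK : ∀ u : X, ‖ι u‖ ≤ K * ‖u‖)
    (S : Set X)
    {P : Type*} [TopologicalSpace P]
    (pol : X → P → X) (sy : X → X)
    (hpolS : ∀ u ∈ S, ∀ H : P, pol u H ∈ S)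
    (hpolCont : ContinuousOn (fun q : X × P => pol q.1 q.2) (S ×ˢ Set.univ))
    (hsypol : ∀ u ∈ S, ∀ H : P,
      pol (sy u) H = sy u ∧ sy (pol u H) = sy u ∧ pol (pol u H) H = pol u H)
    (happrox : ∃ Hs : ℕ → P, ∀ u ∈ S,
      Filter.Tendsto (fun m => ι (List.foldl pol u ((List.range m).map Hs)))
        Filter.atTop (nhds (ι (sy u))))
    (hpolContr : ∀ u ∈ S, ∀ v ∈ S, ∀ H : P, ‖ι (pol u H) - ι (pol v H)‖ ≤ ‖ι u - ι v‖)
    (Θ : X → X) (CΘ : ℝ) (hCΘ : 0 < CΘ)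
    (hΘS : ∀ u : X, Θ u ∈ S)
    (hΘlip : ∀ u v : X, ‖ι (Θ u) - ι (Θ v)‖ ≤ CΘ * ‖ι u - ι v‖)
    (hpolext : ∀ u : X, ∀ H : P, pol u H = pol (Θ u) H)
    (hsyext : ∀ u : X, sy u = sy (Θ u))
    (hΘcont : Continuous Θ)
    (hzeropol : ∀ H : P, pol 0 H = 0)
    (ψ : X) (hψpol : ∀ H : P, pol ψ H = ψ)
    (f : X → ℝ) (hf : ContDiff ℝ 1 f)
    (hfpolX : ∀ u : X, ∀ H : P, f (pol u H) ≤ f u)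
    (c : ℝ)
    (hc : c = sInf {r : ℝ | ∃ γ : ℝ → X, ContinuousOn γ (Set.Icc 0 1) ∧
      γ 0 = 0 ∧ γ 1 = ψ ∧ r = sSup (f '' (γ '' Set.Icc 0 1))})
    (hpaths : {r : ℝ | ∃ γ : ℝ → X, ContinuousOn γ (Set.Icc 0 1) ∧
      γ 0 = 0 ∧ γ 1 = ψ ∧ r = sSup (f '' (γ '' Set.Icc 0 1))}.Nonempty)
    (hcgt : max (f 0) (f ψ) < c) :
    ∀ ε > (0:ℝ), ∃ uε : X,
      ‖ι uε - ι (sy uε)‖ < ε ∧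
      ‖fderiv ℝ f uε‖ ≤ ε ∧
      c ≤ f uε ∧ f uε ≤ c + ε := by
  intro ε hε
  obtain ⟨Hs, hHs⟩ := happrox
  rw [setOf_sSup_image_path_eq] at hc hpaths
  have hc_le : ∀ γ : C(unitInterval, X), γ 0 = 0 → γ 1 = ψ → c ≤ supAlong f γ :=
    fun γ hγ0 hγ1 => hc ▸ csInf_le
      ⟨f 0, forall_mem_image.2 fun γ hγ => hγ.1 ▸ le_supAlong hf.continuous γ 0⟩
      ⟨γ, ⟨hγ0, hγ1⟩, rfl⟩
  -- the displacement `r` caused by Ekeland's principle costs `(1 + CΘ) * K * r` in symmetry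
  obtain ⟨r, hr, hr2, hrK⟩ : ∃ r > 0, r < 2 ∧ (1 + CΘ) * K * r < ε / 2 :=
    ((gt_mem_nhds two_pos).and (((continuous_const.mul continuous_id).tendsto' 0 0
      (mul_zero _)).eventually (gt_mem_nhds (half_pos hε)))).exists_gt
  obtain ⟨_, ⟨γ₀, ⟨hγ₀0, hγ₀1⟩, rfl⟩, hγ₀c⟩ :=
    Real.lt_sInf_add_pos hpaths (mul_pos (half_pos hε) hr)
  obtain ⟨Γ, hΓfix, hΓf, hΓsym⟩ := exists_polarized_near_symmetric ι
    hpolS hpolCont (fun u hu H => (hsypol u hu H).2.1) hpolContr hHs ι.continuous hΘS hΘcont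
    hpolext hfpolX γ₀ (half_pos hε)
  have hΓc : supAlong f Γ < c + ε / 2 * r :=
    (supAlong_le fun t => (hΓf t).trans (le_supAlong hf.continuous γ₀ t)).trans_lt (hc ▸ hγ₀c)
  obtain ⟨t, u, hu, hderiv, hcu, huc⟩ := exists_almost_critical_near_path hf hc_le hcgt
    ((hΓfix 0 fun H => by rw [hγ₀0, hzeropol]).trans hγ₀0)
    ((hΓfix 1 fun H => by rw [hγ₀1, hψpol]).trans hγ₀1) (half_pos hε) (half_lt_self hε) hΓc
  refine ⟨u, ?_, hderiv, hcu, ?_⟩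
  · calc ‖ι u - ι (sy u)‖ ≤ ‖ι (Γ t) - ι (sy (Γ t))‖ + (1 + CΘ) * K * ‖u - Γ t‖ :=
          norm_sub_sy_le ι hCΘ.le (fun u v => map_sub ι u v ▸ hιK (u - v))
            (norm_sy_sub_sy_le_mul ι hpolS hpolContr hHs hΘS hΘlip hsyext) _ _
      _ < ε / 2 + ε / 2 := add_lt_add (hΓsym t)
          ((mul_le_mul_of_nonneg_left hu.le (by positivity)).trans_lt hrK)
      _ = ε := add_halves ε
  · linarith [mul_lt_mul_of_pos_left hr2 (half_pos hε)]

theorem symmetric_mountain_pass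
    {X : Type*} [NormedAddCommGroup X] [NormedSpace ℝ X] [CompleteSpace X]
    {V : Type*} [NormedAddCommGroup V] [NormedSpace ℝ V] [CompleteSpace V]
    {W : Type*} [NormedAddCommGroup W] [NormedSpace ℝ W] [CompleteSpace W]
    (ι : X →L[ℝ] V) (κ : V →L[ℝ] W)
    (K : ℝ) (hK : 0 < K) (hιK : ∀ u : X, ‖ι u‖ ≤ K * ‖u‖)
    (S : Set X)
    {P : Type*} [TopologicalSpace P] [PathConnectedSpace P]
    (pol : X → P → X) (sy : X → X)
    (hpolS : ∀ u ∈ S, ∀ H : P, pol u H ∈ S)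
    (hsyS : ∀ u : X, sy u ∈ S)
    (hpolCont : ContinuousOn (fun q : X × P => pol q.1 q.2) (S ×ˢ Set.univ))
    (hsypol : ∀ u ∈ S, ∀ H : P,
      pol (sy u) H = sy u ∧ sy (pol u H) = sy u ∧ pol (pol u H) H = pol u H)
    (happrox : ∃ Hs : ℕ → P, ∀ u ∈ S,
      Filter.Tendsto (fun m => ι (List.foldl pol u ((List.range m).map Hs)))
        Filter.atTop (nhds (ι (sy u))))
    (hpolContr : ∀ u ∈ S, ∀ v ∈ S, ∀ H : P, ‖ι (pol u H) - ι (pol v H)‖ ≤ ‖ι u - ι v‖)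
    (Θ : X → X) (CΘ : ℝ) (hCΘ : 0 < CΘ)
    (hΘS : ∀ u : X, Θ u ∈ S) (hΘid : ∀ u ∈ S, Θ u = u)
    (hΘlip : ∀ u v : X, ‖ι (Θ u) - ι (Θ v)‖ ≤ CΘ * ‖ι u - ι v‖)
    (hpolext : ∀ u : X, ∀ H : P, pol u H = pol (Θ u) H)
    (hsyext : ∀ u : X, sy u = sy (Θ u))
    (hΘcont : Continuous Θ)
    (hzeropol : ∀ H : P, pol 0 H = 0) (hzerosy : sy 0 = 0)
    (ψ : X) (hψS : ψ ∈ S) (hψpol : ∀ H : P, pol ψ H = ψ)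
    (f : X → ℝ) (hf : ContDiff ℝ 1 f)
    (hfpolX : ∀ u : X, ∀ H : P, f (pol u H) ≤ f u)
    (c : ℝ)
    (hc : c = sInf {r : ℝ | ∃ γ : ℝ → X, ContinuousOn γ (Set.Icc 0 1) ∧
      γ 0 = 0 ∧ γ 1 = ψ ∧ r = sSup (f '' (γ '' Set.Icc 0 1))})
    (hpaths : {r : ℝ | ∃ γ : ℝ → X, ContinuousOn γ (Set.Icc 0 1) ∧
      γ 0 = 0 ∧ γ 1 = ψ ∧ r = sSup (f '' (γ '' Set.Icc 0 1))}.Nonempty)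
    (hcgt : max (f 0) (f ψ) < c) :
    ∀ ε > (0:ℝ), ∃ uε : X,
      ‖ι uε - ι (sy uε)‖ < ε ∧
      ‖fderiv ℝ f uε‖ ≤ ε ∧
      c ≤ f uε ∧ f uε ≤ c + ε :=
  symmetric_mountain_pass_general ι K hK hιK S pol sy hpolS hpolCont hsypol happrox hpolContr Θ CΘ
    hCΘ hΘS hΘlip hpolext hsyext hΘcont hzeropol ψ hψpol f hf hfpolX c hc hpaths hcgt
end

section
/- Completeness of the symmetric subspace from the symmetric Ekeland principle. In the abstract symmetrization framework, assume Θ is nonexpansive with respect to ‖·‖_V (Lipschitz constant C_Θ = 1) and assume that the conclusion of the symmetric Ekeland principle holds for the class of bounded below, ‖·‖_V-lower semicontinuous functionals f : X → ℝ ∪ {+∞} which are nonincreasing under polarization on S and satisfy f(Θ(u)) ≤ f(u) for all u ∈ X; namely, for every such f and every ε ∈ (0,1) there exists v ∈ X with f(v) ≤ inf_X f + ε², ‖v − v*‖_V < ε, and f(w) ≥ f(v) − ε‖w − v‖_V for all w ∈ X. Then the space X_{ℋ*} := {u ∈ S : u^H = u for all H ∈ ℋ*}, endowed with the norm ‖·‖_V,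 is complete: every Cauchy sequence in (X_{ℋ*}, ‖·‖_V) converges in ‖·‖_V to an element of X_{ℋ*}. -/
open Filter Topology Metric Set

theorem symmetric_subspace_complete_of_symmetric_ekeland
    {X : Type*} [NormedAddCommGroup X] [NormedSpace ℝ X] [CompleteSpace X]
    {V : Type*} [NormedAddCommGroup V] [NormedSpace ℝ V] [CompleteSpace V]
    {W : Type*} [NormedAddCommGroup W] [NormedSpace ℝ W] [CompleteSpace W]
    (ι : X →L[ℝ] V) (κ : V →L[ℝ] W)
    (K : ℝ) (hK : 0 < K) (hιK : ∀ u : X, ‖ι u‖ ≤ K * ‖u‖)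
    (S : Set X)
    {P : Type*} [TopologicalSpace P] [PathConnectedSpace P]
    (pol : X → P → X) (sy : X → X)
    (hpolS : ∀ u ∈ S, ∀ H : P, pol u H ∈ S)
    (hsyS : ∀ u : X, sy u ∈ S)
    (hpolCont : ContinuousOn (fun q : X × P => pol q.1 q.2) (S ×ˢ Set.univ))
    (hsypol : ∀ u ∈ S, ∀ H : P,
      pol (sy u) H = sy u ∧ sy (pol u H) = sy u ∧ pol (pol u H) H = pol u H)
    (happrox : ∃ Hs : ℕ → P, ∀ u ∈ S,
      Filter.Tendsto (fun m => ι (List.foldl pol u ((List.range m).map Hs)))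
        Filter.atTop (nhds (ι (sy u))))
    (hpolContr : ∀ u ∈ S, ∀ v ∈ S, ∀ H : P, ‖ι (pol u H) - ι (pol v H)‖ ≤ ‖ι u - ι v‖)
    (Θ : X → X) (CΘ : ℝ) (hCΘ : 0 < CΘ)
    (hΘS : ∀ u : X, Θ u ∈ S) (hΘid : ∀ u ∈ S, Θ u = u)
    (hΘlip : ∀ u v : X, ‖ι (Θ u) - ι (Θ v)‖ ≤ CΘ * ‖ι u - ι v‖)
    (hpolext : ∀ u : X, ∀ H : P, pol u H = pol (Θ u) H)
    (hsyext : ∀ u : X, sy u = sy (Θ u))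
    (hΘnonexp : ∀ u v : X, ‖ι (Θ u) - ι (Θ v)‖ ≤ ‖ι u - ι v‖)
    (hEk : ∀ f : X → EReal,
      (∃ c : ℝ, ∀ u : X, (c : EReal) ≤ f u) →
      (∀ (us : ℕ → X) (x : X),
        Filter.Tendsto (fun n => ‖ι (us n) - ι x‖) Filter.atTop (nhds 0) →
        f x ≤ Filter.liminf (fun n => f (us n)) Filter.atTop) →
      (∀ u ∈ S, ∀ H : P, f (pol u H) ≤ f u) →
      (∀ u : X, f (Θ u) ≤ f u) →
      ∀ ε : ℝ, 0 < ε → ε < 1 →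
        ∃ v : X, f v ≤ (⨅ w, f w) + ((ε ^ 2 : ℝ) : EReal) ∧
          ‖ι v - ι (sy v)‖ < ε ∧
          ∀ w : X, f v - ((ε * ‖ι w - ι v‖ : ℝ) : EReal) ≤ f w) :
    ∀ us : ℕ → X, (∀ n, us n ∈ S ∧ ∀ H : P, pol (us n) H = us n) →
      (∀ ε > (0:ℝ), ∃ N : ℕ, ∀ m ≥ N, ∀ n ≥ N, ‖ι (us m) - ι (us n)‖ < ε) →
      ∃ x : X, (x ∈ S ∧ ∀ H : P, pol x H = x) ∧
        Filter.Tendsto (fun n => ‖ι (us n) - ι x‖) Filter.atTop (nhds 0) := by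
  intro us hsym hcauchy
  obtain ⟨Hs, hHs⟩ := happrox
  -- the sequence ι (us n) is Cauchy in V, hence converges to some L
  have hCS : CauchySeq (fun n => ι (us n)) := by
    rw [Metric.cauchySeq_iff]
    intro ε hε
    obtain ⟨N, hN⟩ := hcauchy ε hε
    exact ⟨N, fun m hm n hn => by simpa [dist_eq_norm] using hN m hm n hn⟩
  obtain ⟨L, hL⟩ := cauchySeq_tendsto_of_complete hCS
  -- foldl facts
  have hfoldS : ∀ (l : List P), ∀ u ∈ S, List.foldl pol u l ∈ S := by
    intro l
    induction l with
    | nil => exact fun u hu => hu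
    | cons H t ih => exact fun u hu => ih _ (hpolS u hu H)
  have hfoldne : ∀ (l : List P), ∀ u ∈ S, ∀ v ∈ S,
      ‖ι (List.foldl pol u l) - ι (List.foldl pol v l)‖ ≤ ‖ι u - ι v‖ := by
    intro l
    induction l with
    | nil => exact fun u _ v _ => le_refl _
    | cons H t ih =>
      intro u hu v hv
      exact le_trans (ih _ (hpolS u hu H) _ (hpolS v hv H)) (hpolContr u hu v hv H)
  have hfoldfix : ∀ n (l : List P), List.foldl pol (us n) l = us n := by
    intro n l
    induction l with
    | nil => rfl
    | cons H t ih => simpa [(hsym n).2 H] using ih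
  -- sy fixes us n (at the level of ι)
  have hsyus : ∀ n, ι (sy (us n)) = ι (us n) := by
    intro n
    have h1 := hHs (us n) (hsym n).1
    have h2 : Filter.Tendsto (fun m => ι (List.foldl pol (us n) ((List.range m).map Hs)))
        Filter.atTop (nhds (ι (us n))) := by
      simpa [hfoldfix] using (tendsto_const_nhds :
        Filter.Tendsto (fun _ : ℕ => ι (us n)) Filter.atTop (nhds (ι (us n))))
    exact tendsto_nhds_unique h1 h2
  -- sy is nonexpansive on S
  have hsyneS : ∀ u ∈ S, ∀ v ∈ S, ‖ι (sy u) - ι (sy v)‖ ≤ ‖ι u - ι v‖ := by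
    intro u hu v hv
    have ht : Filter.Tendsto
        (fun m => ‖ι (List.foldl pol u ((List.range m).map Hs))
          - ι (List.foldl pol v ((List.range m).map Hs))‖)
        Filter.atTop (nhds ‖ι (sy u) - ι (sy v)‖) :=
      ((hHs u hu).sub (hHs v hv)).norm
    exact le_of_tendsto' ht fun m => hfoldne _ u hu v hv
  have hsyne : ∀ u v : X, ‖ι (sy u) - ι (sy v)‖ ≤ ‖ι u - ι v‖ := by
    intro u v
    rw [hsyext u, hsyext v]
    exact le_trans (hsyneS _ (hΘS u) _ (hΘS v)) (hΘnonexp u v)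
  -- polarization does not increase distance to L, for u ∈ S
  have hpolL : ∀ u ∈ S, ∀ H : P, ‖ι (pol u H) - L‖ ≤ ‖ι u - L‖ := by
    intro u hu H
    have hev : ∀ n, ‖ι (pol u H) - ι (us n)‖ ≤ ‖ι u - ι (us n)‖ := by
      intro n
      have := hpolContr u hu (us n) (hsym n).1 H
      rwa [(hsym n).2 H] at this
    exact le_of_tendsto_of_tendsto'
      ((tendsto_const_nhds.sub hL).norm) ((tendsto_const_nhds.sub hL).norm) hev
  have hΘL : ∀ u : X, ‖ι (Θ u) - L‖ ≤ ‖ι u - L‖ := by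
    intro u
    have hev : ∀ n, ‖ι (Θ u) - ι (us n)‖ ≤ ‖ι u - ι (us n)‖ := by
      intro n
      have := hΘnonexp u (us n)
      rwa [hΘid (us n) (hsym n).1] at this
    exact le_of_tendsto_of_tendsto'
      ((tendsto_const_nhds.sub hL).norm) ((tendsto_const_nhds.sub hL).norm) hev
  -- the functional
  set g : X → EReal := fun u => ((‖ι u - L‖ + ‖ι u - ι (sy u)‖ : ℝ) : EReal) with hg
  have hbdd : ∃ c : ℝ, ∀ u : X, (c : EReal) ≤ g u := by
    refine ⟨0, fun u => ?_⟩
    simp only [hg]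
    exact_mod_cast add_nonneg (norm_nonneg _) (norm_nonneg _)
  have hlsc : ∀ (vs : ℕ → X) (x : X),
      Filter.Tendsto (fun n => ‖ι (vs n) - ι x‖) Filter.atTop (nhds 0) →
      g x ≤ Filter.liminf (fun n => g (vs n)) Filter.atTop := by
    intro vs x h
    have hvx : Filter.Tendsto (fun n => ι (vs n)) Filter.atTop (nhds (ι x)) :=
      tendsto_iff_norm_sub_tendsto_zero.mpr h
    have hsvx : Filter.Tendsto (fun n => ι (sy (vs n))) Filter.atTop (nhds (ι (sy x))) := by
      rw [tendsto_iff_norm_sub_tendsto_zero]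
      exact squeeze_zero (fun n => norm_nonneg _) (fun n => hsyne (vs n) x) h
    have hreal : Filter.Tendsto (fun n => (‖ι (vs n) - L‖ + ‖ι (vs n) - ι (sy (vs n))‖ : ℝ))
        Filter.atTop (nhds (‖ι x - L‖ + ‖ι x - ι (sy x)‖)) :=
      ((hvx.sub tendsto_const_nhds).norm).add ((hvx.sub hsvx).norm)
    have hE : Filter.Tendsto (fun n => g (vs n)) Filter.atTop (nhds (g x)) :=
      (continuous_coe_real_ereal.tendsto _).comp hreal
    exact le_of_eq hE.liminf_eq.symm
  have hgpol : ∀ u ∈ S, ∀ H : P, g (pol u H) ≤ g u := by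
    intro u hu H
    have h2 : ‖ι (pol u H) - ι (sy (pol u H))‖ ≤ ‖ι u - ι (sy u)‖ := by
      rw [(hsypol u hu H).2.1]
      calc ‖ι (pol u H) - ι (sy u)‖ = ‖ι (pol u H) - ι (pol (sy u) H)‖ := by
            rw [(hsypol u hu H).1]
        _ ≤ ‖ι u - ι (sy u)‖ := hpolContr u hu (sy u) (hsyS u) H
    simp only [hg]
    exact_mod_cast add_le_add (hpolL u hu H) h2
  have hgΘ : ∀ u : X, g (Θ u) ≤ g u := by
    intro u
    have h2 : ‖ι (Θ u) - ι (sy (Θ u))‖ ≤ ‖ι u - ι (sy u)‖ := by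
      rw [← hsyext u]
      calc ‖ι (Θ u) - ι (sy u)‖ = ‖ι (Θ u) - ι (Θ (sy u))‖ := by
            rw [hΘid (sy u) (hsyS u)]
        _ ≤ ‖ι u - ι (sy u)‖ := hΘnonexp u (sy u)
    simp only [hg]
    exact_mod_cast add_le_add (hΘL u) h2
  obtain ⟨v, _, _, h3⟩ := hEk g hbdd hlsc hgpol hgΘ (1/2) (by norm_num) (by norm_num)
  -- extract the real inequality for w = us n and pass to the limit
  set G : ℝ := ‖ι v - L‖ + ‖ι v - ι (sy v)‖ with hG
  have hre : ∀ n, G - (1/2) * ‖ι (us n) - ι v‖ ≤ ‖ι (us n) - L‖ := by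
    intro n
    have := h3 (us n)
    rw [hg] at this
    simp only at this
    rw [← EReal.coe_sub, EReal.coe_le_coe_iff] at this
    simpa [hsyus n] using this
  have hGle : G ≤ (1/2) * ‖L - ι v‖ := by
    have ht : Filter.Tendsto (fun n => ‖ι (us n) - L‖ + (1/2) * ‖ι (us n) - ι v‖)
        Filter.atTop (nhds (‖L - L‖ + (1/2) * ‖L - ι v‖)) :=
      ((hL.sub tendsto_const_nhds).norm).add
        (((hL.sub tendsto_const_nhds).norm).const_mul _)
    have ht' : Filter.Tendsto (fun n => ‖ι (us n) - L‖ + (1/2) * ‖ι (us n) - ι v‖)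
        Filter.atTop (nhds ((1/2) * ‖L - ι v‖)) := by simpa using ht
    exact ge_of_tendsto' ht' fun n => by linarith [hre n]
  have hvL : ι v = L ∧ ι (sy v) = ι v := by
    have h1 : ‖L - ι v‖ = ‖ι v - L‖ := norm_sub_rev _ _
    have h2 : ‖ι v - L‖ ≥ 0 := norm_nonneg _
    have h3' : ‖ι v - ι (sy v)‖ ≥ 0 := norm_nonneg _
    have hzero : ‖ι v - L‖ = 0 ∧ ‖ι v - ι (sy v)‖ = 0 := by
      constructor <;> nlinarith [hGle, hG]
    exact ⟨sub_eq_zero.mp (norm_eq_zero.mp hzero.1),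
      (sub_eq_zero.mp (norm_eq_zero.mp hzero.2)).symm⟩
  refine ⟨sy v, ⟨hsyS v, fun H => ?_⟩, ?_⟩
  · rw [hsyext v]
    exact (hsypol (Θ v) (hΘS v) H).1
  · have : ι (sy v) = L := hvL.2.trans hvL.1
    rw [this]
    exact tendsto_iff_norm_sub_tendsto_zero.mp hL
end

section
/- Symmetric Caristi fixed point theorem. In the abstract symmetrization framework, let X be a Banach space and F : X → X a map such that ‖F(u) − u‖ ≤ f(u) − f(F(u)) for all u ∈ X, where f : X → ℝ is a lower semicontinuous functional bounded from below satisfying f(u^H) ≤ f(u) for all u ∈ S and all H ∈ ℋ*, and such that for every u ∈ X there exists ξ ∈ S with f(ξ) ≤ f(u). Then for every ε ∈ (0,1) there exists a fixed point ξ_ε ∈ X of F (i.e., F(ξ_ε) = ξ_ε) such that ‖ξ_ε − ξ_ε*‖_V < ε. -/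
open Filter Topology Metric Set

theorem ekeland_aux {X : Type*} [NormedAddCommGroup X] [CompleteSpace X]
    (f : X → ℝ) (hfbdd : BddBelow (Set.range f)) (hflsc : LowerSemicontinuous f)
    (v : X) :
    ∃ ξ : X, f ξ + ‖v - ξ‖ ≤ f v ∧ ∀ y : X, f y + ‖ξ - y‖ ≤ f ξ → y = ξ := by
  set rel : X → X → Prop := fun a b => f b + ‖a - b‖ ≤ f a with hrel
  have hrefl : ∀ a, rel a a := by intro a; simp [hrel]
  have htrans : ∀ {a b c}, rel a b → rel b c → rel a c := by
    intro a b c h1 h2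
    have htri : ‖a - c‖ ≤ ‖a - b‖ + ‖b - c‖ := norm_sub_le_norm_sub_add_norm_sub a b c
    simp only [hrel] at *
    linarith
  -- Zorn on the subtype
  have hchain : ∀ c : Set {x : X // rel v x},
      IsChain (fun a b : {x : X // rel v x} => rel a.1 b.1) c →
      ∃ ub : {x : X // rel v x}, ∀ a ∈ c, rel a.1 ub.1 := by
    intro c hc
    rcases c.eq_empty_or_nonempty with rfl | ⟨y₀, hy₀⟩
    · exact ⟨⟨v, hrefl v⟩, by simp⟩
    · set A : Set ℝ := (fun t : {x : X // rel v x} => f t.1) '' c with hA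
      have hAne : A.Nonempty := ⟨f y₀.1, ⟨y₀, hy₀, rfl⟩⟩
      have hAbdd : BddBelow A := hfbdd.mono (by rintro a ⟨t, _, rfl⟩; exact ⟨t.1, rfl⟩)
      set M : ℝ := sInf A with hM
      have hMle : ∀ t ∈ c, M ≤ f (Subtype.val t) := fun t ht => csInf_le hAbdd ⟨t, ht, rfl⟩
      have hsel : ∀ n : ℕ, ∃ t : {x : X // rel v x}, t ∈ c ∧ f t.1 < M + 1 / (n + 1) := by
        intro n
        obtain ⟨a, ⟨t, htc, rfl⟩, hlt⟩ := Real.lt_sInf_add_pos hAne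
          (show (0:ℝ) < 1 / (n + 1) by positivity)
        exact ⟨t, htc, hlt⟩
      choose x hxc hxf using hsel
      -- pairwise comparison gives Cauchy
      have hcomp : ∀ n m : ℕ, ‖(x n).1 - (x m).1‖ ≤ max (1 / ((n:ℝ) + 1)) (1 / ((m:ℝ) + 1)) := by
        intro n m
        rcases eq_or_ne (x n) (x m) with h | h
        · simp only [h, sub_self, norm_zero]
          positivity
        · rcases hc (hxc n) (hxc m) h with h | h
          · have h1 := hxf n
            have h2 := hMle (x m) (hxc m)
            simp only [hrel] at h
            have : ‖(x n).1 - (x m).1‖ ≤ 1 / (n + 1) := by linarith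
            exact le_trans this (le_max_left _ _)
          · have h1 := hxf m
            have h2 := hMle (x n) (hxc n)
            simp only [hrel] at h
            rw [norm_sub_rev]
            have : ‖(x m).1 - (x n).1‖ ≤ 1 / (m + 1) := by linarith
            exact le_trans this (le_max_right _ _)
      have hcauchy : CauchySeq (fun n => (x n).1) := by
        apply cauchySeq_of_le_tendsto_0 (fun N : ℕ => 1 / (N + 1))
        · intro n m N hn hm
          rw [dist_eq_norm]
          refine le_trans (hcomp n m) (max_le ?_ ?_)
          · apply one_div_le_one_div_of_le (by positivity)
            have : (N:ℝ) ≤ n := Nat.cast_le.mpr hn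
            linarith
          · apply one_div_le_one_div_of_le (by positivity)
            have : (N:ℝ) ≤ m := Nat.cast_le.mpr hm
            linarith
        · exact tendsto_one_div_add_atTop_nhds_zero_nat
      obtain ⟨xlim, htend⟩ := cauchySeq_tendsto_of_complete hcauchy
      have hnorm0 : Tendsto (fun n => ‖(x n).1 - xlim‖) atTop (𝓝 0) := by
        simpa [dist_eq_norm] using tendsto_iff_dist_tendsto_zero.mp htend
      have hfx : f xlim ≤ M := by
        by_contra h
        push_neg at h
        have hmid : (M + f xlim) / 2 < f xlim := by linarith
        have hev1 : ∀ᶠ n in atTop, (M + f xlim) / 2 < f (x n).1 :=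
          htend.eventually (hflsc xlim _ hmid)
        have hev2 : ∀ᶠ n in atTop, f (x n).1 < (M + f xlim) / 2 := by
          have hpos : (0:ℝ) < (f xlim - M) / 2 := by linarith
          filter_upwards [tendsto_one_div_add_atTop_nhds_zero_nat.eventually
            (gt_mem_nhds hpos)] with n hn
          have := hxf n
          linarith
        obtain ⟨n, h1, h2⟩ := (hev1.and hev2).exists
        linarith
      have key : ∀ y ∈ c, ∀ n : ℕ,
          f xlim + ‖y.1 - xlim‖ ≤ f (Subtype.val y) + 1 / (n + 1) + ‖(x n).1 - xlim‖ := by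
        intro y hy n
        have htri : ‖y.1 - xlim‖ ≤ ‖y.1 - (x n).1‖ + ‖(x n).1 - xlim‖ :=
          norm_sub_le_norm_sub_add_norm_sub _ _ _
        have hMn := hMle (x n) (hxc n)
        have hMy := hMle y hy
        have hpos : (0:ℝ) < 1 / (n + 1) := by positivity
        rcases eq_or_ne y (x n) with h | h
        · subst h
          linarith
        · rcases hc hy (hxc n) h with h | h
          · simp only [hrel] at h
            linarith
          · simp only [hrel] at h
            have h1 := hxf n
            have h2 : ‖y.1 - (x n).1‖ = ‖(x n).1 - y.1‖ := norm_sub_rev _ _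
            linarith
      have hbound : ∀ y ∈ c, rel y.1 xlim := by
        intro y hy
        have hlim : Tendsto (fun n : ℕ => f (Subtype.val y) + 1 / (n + 1) + ‖(x n).1 - xlim‖)
            atTop (𝓝 (f (Subtype.val y) + 0 + 0)) :=
          (tendsto_const_nhds.add tendsto_one_div_add_atTop_nhds_zero_nat).add hnorm0
        have := ge_of_tendsto hlim (Eventually.of_forall (key y hy))
        simpa [hrel] using this
      have hvx : rel v xlim := htrans y₀.2 (hbound y₀ hy₀)
      exact ⟨⟨xlim, hvx⟩, fun a ha => hbound a ha⟩
  obtain ⟨m, hm⟩ :=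
    exists_maximal_of_chains_bounded
      (r := fun a b : {x : X // rel v x} => rel a.1 b.1)
      hchain (fun {a b c} => htrans)
  refine ⟨m.1, m.2, ?_⟩
  intro y hy
  have hvy : rel v y := htrans m.2 hy
  have h2 : rel y m.1 := hm ⟨y, hvy⟩ hy
  simp only [hrel] at hy h2
  have h3 : ‖m.1 - y‖ = ‖y - m.1‖ := norm_sub_rev _ _
  have h4 : ‖y - m.1‖ ≤ 0 := by linarith
  have h5 : y - m.1 = 0 := by
    simpa using le_antisymm h4 (norm_nonneg _)
  exact sub_eq_zero.mp h5
theorem symmetric_caristi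
    {X : Type*} [NormedAddCommGroup X] [NormedSpace ℝ X] [CompleteSpace X]
    {V : Type*} [NormedAddCommGroup V] [NormedSpace ℝ V] [CompleteSpace V]
    {W : Type*} [NormedAddCommGroup W] [NormedSpace ℝ W] [CompleteSpace W]
    (ι : X →L[ℝ] V) (κ : V →L[ℝ] W)
    (K : ℝ) (hK : 0 < K) (hιK : ∀ u : X, ‖ι u‖ ≤ K * ‖u‖)
    (S : Set X)
    {P : Type*} [TopologicalSpace P] [PathConnectedSpace P]
    (pol : X → P → X) (sy : X → X)
    (hpolS : ∀ u ∈ S, ∀ H : P, pol u H ∈ S)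
    (hsyS : ∀ u : X, sy u ∈ S)
    (hpolCont : ContinuousOn (fun q : X × P => pol q.1 q.2) (S ×ˢ Set.univ))
    (hsypol : ∀ u ∈ S, ∀ H : P,
      pol (sy u) H = sy u ∧ sy (pol u H) = sy u ∧ pol (pol u H) H = pol u H)
    (happrox : ∃ Hs : ℕ → P, ∀ u ∈ S,
      Filter.Tendsto (fun m => ι (List.foldl pol u ((List.range m).map Hs)))
        Filter.atTop (nhds (ι (sy u))))
    (hpolContr : ∀ u ∈ S, ∀ v ∈ S, ∀ H : P, ‖ι (pol u H) - ι (pol v H)‖ ≤ ‖ι u - ι v‖)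
    (Θ : X → X) (CΘ : ℝ) (hCΘ : 0 < CΘ)
    (hΘS : ∀ u : X, Θ u ∈ S) (hΘid : ∀ u ∈ S, Θ u = u)
    (hΘlip : ∀ u v : X, ‖ι (Θ u) - ι (Θ v)‖ ≤ CΘ * ‖ι u - ι v‖)
    (hpolext : ∀ u : X, ∀ H : P, pol u H = pol (Θ u) H)
    (hsyext : ∀ u : X, sy u = sy (Θ u))
    (F : X → X) (f : X → ℝ)
    (hF : ∀ u : X, ‖F u - u‖ ≤ f u - f (F u))
    (hfbdd : BddBelow (Set.range f))
    (hflsc : LowerSemicontinuous f)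
    (hfpol : ∀ u ∈ S, ∀ H : P, f (pol u H) ≤ f u)
    (hfS : ∀ u : X, ∃ ξ ∈ S, f ξ ≤ f u) :
    ∀ ε : ℝ, 0 < ε → ε < 1 →
      ∃ ξε : X, F ξε = ξε ∧ ‖ι ξε - ι (sy ξε)‖ < ε := by
  intro ε hε hε1
  obtain ⟨Hs, hHs⟩ := happrox
  set g : X → ℕ → X := fun u m => List.foldl pol u ((List.range m).map Hs) with hg
  have hg0 : ∀ u, g u 0 = u := by intro u; simp [hg]
  have hgstep : ∀ u m, g u (m + 1) = pol (g u m) (Hs m) := by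
    intro u m
    simp [hg, List.range_succ]
  have hgS : ∀ u ∈ S, ∀ m, g u m ∈ S := by
    intro u hu m
    induction m with
    | zero => rw [hg0]; exact hu
    | succ m ih => rw [hgstep]; exact hpolS _ ih _
  have hgsy : ∀ u ∈ S, ∀ m, sy (g u m) = sy u := by
    intro u hu m
    induction m with
    | zero => rw [hg0]
    | succ m ih => rw [hgstep, (hsypol _ (hgS u hu m) (Hs m)).2.1, ih]
  have hgf : ∀ u ∈ S, ∀ m, f (g u m) ≤ f u := by
    intro u hu m
    induction m with
    | zero => rw [hg0]
    | succ m ih => rw [hgstep]; exact le_trans (hfpol _ (hgS u hu m) _) ih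
  have hgcontr : ∀ u ∈ S, ∀ w ∈ S, ∀ m, ‖ι (g u m) - ι (g w m)‖ ≤ ‖ι u - ι w‖ := by
    intro u hu w hw m
    induction m with
    | zero => rw [hg0, hg0]
    | succ m ih =>
      rw [hgstep, hgstep]
      exact le_trans (hpolContr _ (hgS u hu m) _ (hgS w hw m) _) ih
  have hsyLip : ∀ u ∈ S, ∀ w ∈ S, ‖ι (sy u) - ι (sy w)‖ ≤ ‖ι u - ι w‖ := by
    intro u hu w hw
    have h1 := hHs u hu
    have h2 := hHs w hw
    have hlim : Tendsto (fun m => ‖ι (g u m) - ι (g w m)‖) atTop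
        (𝓝 ‖ι (sy u) - ι (sy w)‖) := (h1.sub h2).norm
    exact le_of_tendsto hlim (Eventually.of_forall (hgcontr u hu w hw))
  -- set up constants
  set D : ℝ := 1 + K + CΘ * K with hD
  have hDpos : 0 < D := by positivity
  set δ : ℝ := ε / D with hδ
  have hδpos : 0 < δ := div_pos hε hDpos
  set m0 : ℝ := sInf (Set.range f) with hm0
  have hm0le : ∀ u : X, m0 ≤ f u := fun u => csInf_le hfbdd ⟨u, rfl⟩
  obtain ⟨a, ⟨u, rfl⟩, hau⟩ := Real.lt_sInf_add_pos (s := Set.range f) ⟨f 0, 0, rfl⟩ hδpos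
  obtain ⟨u₀, hu₀S, hu₀f⟩ := hfS u
  have hu₀f' : f u₀ < m0 + δ := lt_of_le_of_lt hu₀f hau
  -- approximate symmetrization
  obtain ⟨M, hM⟩ := (Metric.tendsto_atTop.mp (hHs u₀ hu₀S) δ hδpos)
  set v : X := g u₀ M with hv
  have hvS : v ∈ S := hgS u₀ hu₀S M
  have hvf : f v < m0 + δ := lt_of_le_of_lt (hgf u₀ hu₀S M) hu₀f'
  have hvclose : ‖ι v - ι (sy v)‖ < δ := by
    have := hM M le_rfl
    rw [dist_eq_norm] at this
    rwa [hgsy u₀ hu₀S M]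
  -- Ekeland / Caristi
  obtain ⟨ξ, hξ1, hξ2⟩ := ekeland_aux f hfbdd hflsc v
  have hfix : F ξ = ξ := by
    apply hξ2
    have h1 := hF ξ
    have h2 : ‖ξ - F ξ‖ = ‖F ξ - ξ‖ := norm_sub_rev _ _
    linarith
  have hdist : ‖v - ξ‖ ≤ δ := by
    have := hm0le ξ
    linarith
  -- final estimate
  have hvd : ‖ι v - ι ξ‖ ≤ K * δ := by
    have h1 : ι v - ι ξ = ι (v - ξ) := (map_sub ι v ξ).symm
    rw [h1]
    exact le_trans (hιK _) (mul_le_mul_of_nonneg_left hdist hK.le)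
  have t1 : ‖ι ξ - ι v‖ ≤ K * δ := by rwa [norm_sub_rev]
  have t3 : ‖ι (sy v) - ι (sy ξ)‖ ≤ CΘ * (K * δ) := by
    rw [hsyext v, hsyext ξ]
    refine le_trans (hsyLip _ (hΘS v) _ (hΘS ξ)) ?_
    exact le_trans (hΘlip v ξ) (mul_le_mul_of_nonneg_left hvd hCΘ.le)
  have htri : ‖ι ξ - ι (sy ξ)‖ ≤ ‖ι ξ - ι v‖ + ‖ι v - ι (sy v)‖ + ‖ι (sy v) - ι (sy ξ)‖ := by
    have h1 : ‖ι ξ - ι (sy ξ)‖ ≤ ‖ι ξ - ι v‖ + ‖ι v - ι (sy ξ)‖ :=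
      norm_sub_le_norm_sub_add_norm_sub _ _ _
    have h2 : ‖ι v - ι (sy ξ)‖ ≤ ‖ι v - ι (sy v)‖ + ‖ι (sy v) - ι (sy ξ)‖ :=
      norm_sub_le_norm_sub_add_norm_sub _ _ _
    linarith
  have hεδ : K * δ + δ + CΘ * (K * δ) = ε := by
    have : δ * D = ε := div_mul_cancel₀ ε hDpos.ne'
    rw [hD] at this
    ring_nf
    ring_nf at this
    linarith
  refine ⟨ξ, hfix, ?_⟩
  linarith
end

section
/- Symmetric Flower Petal theorem. In the abstract symmetrization framework with X carrying the norm ‖·‖_V, let C be a closed subset of S such that u^H ∈ C for all u ∈ C and H ∈ ℋ*, and u* ∈ C for all u ∈ C. Let x ∈ C and y ∈ S \ C satisfy x^H = x and y^H = y for all H ∈ ℋ*, and suppose ‖x − y‖_V ≤ d(y,C) + ε² for some ε > 0, where d(y,C) := inf{‖y − c‖_V : c ∈ C}. Then there exists ξ_ε ∈ Petal_ε(x,y) ∩ C such that Petal_ε(ξ_ε, y) ∩ C = {ξ_ε} and ‖ξ_ε − ξ_ε*‖_V < ε. -/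
open Filter Topology Metric Set

theorem petal_ekeland
    {X : Type*} [NormedAddCommGroup X] [NormedSpace ℝ X] [CompleteSpace X]
    (T : Set X) (hT : IsClosed T) (y x : X) (hx : x ∈ T) (ε : ℝ) (hε : 0 < ε) :
    ∃ ξ ∈ T, (ε * ‖ξ - x‖ + ‖ξ - y‖ ≤ ‖x - y‖) ∧
      ∀ z ∈ T, ε * ‖z - ξ‖ + ‖z - y‖ ≤ ‖ξ - y‖ → z = ξ := by
  classical
  set Q : X → Set X := fun u => {z | z ∈ T ∧ ε * ‖z - u‖ + ‖z - y‖ ≤ ‖u - y‖} with hQ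
  have hQself : ∀ u ∈ T, u ∈ Q u := by
    intro u hu
    refine ⟨hu, ?_⟩
    simp
  have hQtrans : ∀ u v : X, v ∈ Q u → Q v ⊆ Q u := by
    rintro u v ⟨hvT, hv⟩ z ⟨hzT, hz⟩
    refine ⟨hzT, ?_⟩
    have htri : ‖z - u‖ ≤ ‖z - v‖ + ‖v - u‖ := norm_sub_le_norm_sub_add_norm_sub z v u
    nlinarith [mul_le_mul_of_nonneg_left htri hε.le]
  have hQclosed : ∀ u : X, IsClosed (Q u) := by
    intro u
    have : IsClosed {z : X | ε * ‖z - u‖ + ‖z - y‖ ≤ ‖u - y‖} := by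
      apply isClosed_le _ continuous_const
      fun_prop
    exact hT.inter this
  have hbdd : ∀ u : X, BddBelow ((fun z => ‖z - y‖) '' Q u) := by
    intro u
    exact ⟨0, by rintro a ⟨z, _, rfl⟩; exact norm_nonneg _⟩
  have hstep : ∀ (n : ℕ) (v : {w : X // w ∈ T}), ∃ w : {w : X // w ∈ T},
      w.1 ∈ Q v.1 ∧
      ‖w.1 - y‖ ≤ sInf ((fun z => ‖z - y‖) '' Q v.1) + (1/2 : ℝ)^n := by
    intro n v
    have hne : ((fun z => ‖z - y‖) '' Q v.1).Nonempty :=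
      ⟨_, ⟨v.1, hQself _ v.2, rfl⟩⟩
    obtain ⟨a, ⟨w, hwQ, rfl⟩, hlt⟩ :=
      Real.lt_sInf_add_pos hne (by positivity : (0:ℝ) < (1/2 : ℝ)^n)
    exact ⟨⟨w, hwQ.1⟩, hwQ, hlt.le⟩
  choose g hgQ hgf using hstep
  let u : ℕ → {w : X // w ∈ T} := fun n => Nat.rec ⟨x, hx⟩ g n
  have hustep : ∀ n, u (n+1) = g n (u n) := fun _ => rfl
  have hmem : ∀ n, ((u (n+1)).1) ∈ Q ((u n).1) := fun n => by rw [hustep]; exact hgQ n (u n)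
  have hval : ∀ n, ‖(u (n+1)).1 - y‖ ≤
      sInf ((fun z => ‖z - y‖) '' Q ((u n).1)) + (1/2 : ℝ)^n := fun n => by rw [hustep]; exact hgf n (u n)
  have huQ : ∀ n m, n ≤ m → ((u m).1) ∈ Q ((u n).1) := by
    intro n m h
    induction m, h using Nat.le_induction with
    | base => exact hQself _ (u n).2
    | succ m hnm ih => exact hQtrans _ _ ih (hmem m)
  have hdiam : ∀ n, ∀ z ∈ Q ((u (n+1)).1), ε * ‖z - (u (n+1)).1‖ ≤ (1/2 : ℝ)^n := by
    intro n z hz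
    have hz' : z ∈ Q ((u n).1) := hQtrans _ _ (hmem n) hz
    have h1 : sInf ((fun z => ‖z - y‖) '' Q ((u n).1)) ≤ ‖z - y‖ :=
      csInf_le (hbdd _) ⟨z, hz', rfl⟩
    have h2 := hz.2
    have h3 := hval n
    linarith
  have key : ∀ n m, n + 1 ≤ m → ε * ‖(u m).1 - (u (n+1)).1‖ ≤ (1/2 : ℝ)^n :=
    fun n m h => hdiam n _ (huQ (n+1) m h)
  have hcauchy : CauchySeq (fun n => (u (n+1)).1) := by
    apply cauchySeq_of_le_tendsto_0 (fun N => (2/ε) * (1/2 : ℝ)^N)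
    · intro n m N hn hm
      have k1 := key N (n+1) (by omega)
      have k2 := key N (m+1) (by omega)
      have htri : ‖(u (n+1)).1 - (u (m+1)).1‖ ≤
          ‖(u (n+1)).1 - (u (N+1)).1‖ + ‖(u (N+1)).1 - (u (m+1)).1‖ :=
        norm_sub_le_norm_sub_add_norm_sub _ _ _
      rw [dist_eq_norm]
      rw [← norm_neg ((u (N+1)).1 - (u (m+1)).1), neg_sub] at htri
      rw [div_mul_eq_mul_div, le_div_iff₀ hε]
      nlinarith [mul_le_mul_of_nonneg_left htri hε.le]
    · have := (tendsto_pow_atTop_nhds_zero_of_lt_one (by norm_num : (0:ℝ) ≤ 1/2)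
        (by norm_num : (1/2:ℝ) < 1)).const_mul (2/ε)
      simpa using this
  obtain ⟨ξ, hξ⟩ := cauchySeq_tendsto_of_complete hcauchy
  have hξQ : ∀ n, ξ ∈ Q ((u n).1) := by
    intro n
    refine (hQclosed _).mem_of_tendsto hξ ?_
    filter_upwards [Filter.eventually_ge_atTop n] with m hm
    exact huQ n (m+1) (by omega)
  have hξ0 := hξQ 0
  have hξT : ξ ∈ T := hξ0.1
  refine ⟨ξ, hξT, hξ0.2, ?_⟩
  intro z hzT hzp
  have hzQ : ∀ n, z ∈ Q ((u n).1) := fun n => hQtrans _ _ (hξQ n) ⟨hzT, hzp⟩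
  have hb : ∀ n, ε * ‖z - (u (n+1)).1‖ ≤ (1/2 : ℝ)^n := fun n => hdiam n z (hzQ (n+1))
  have h1 : Tendsto (fun n => ε * ‖z - (u (n+1)).1‖) atTop (nhds (ε * ‖z - ξ‖)) :=
    Tendsto.const_mul _ ((tendsto_const_nhds.sub hξ).norm)
  have h2 : Tendsto (fun n : ℕ => (1/2 : ℝ)^n) atTop (nhds 0) :=
    tendsto_pow_atTop_nhds_zero_of_lt_one (by norm_num) (by norm_num)
  have h3 : ε * ‖z - ξ‖ ≤ 0 := le_of_tendsto_of_tendsto' h1 h2 hb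
  have h4 : ‖z - ξ‖ ≤ 0 := nonpos_of_mul_nonpos_right (by linarith [h3]) hε
  have : z - ξ = 0 := norm_le_zero_iff.mp h4
  exact sub_eq_zero.mp this

def Petal {X : Type*} [NormedAddCommGroup X] [NormedSpace ℝ X]
    (ε : ℝ) (x₀ x₁ : X) : Set X :=
  {y : X | ε * ‖y - x₀‖ + ‖y - x₁‖ ≤ ‖x₀ - x₁‖}

theorem symmetric_flower_petal
    {X : Type*} [NormedAddCommGroup X] [NormedSpace ℝ X] [CompleteSpace X]
    (S : Set X)
    {P : Type*} [TopologicalSpace P] [PathConnectedSpace P]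
    (pol : X → P → X) (sy : X → X)
    (hpolS : ∀ u ∈ S, ∀ H : P, pol u H ∈ S)
    (hsyS : ∀ u : X, sy u ∈ S)
    (hpolCont : ContinuousOn (fun q : X × P => pol q.1 q.2) (S ×ˢ Set.univ))
    (hsypol : ∀ u ∈ S, ∀ H : P,
      pol (sy u) H = sy u ∧ sy (pol u H) = sy u ∧ pol (pol u H) H = pol u H)
    (happrox : ∃ Hs : ℕ → P, ∀ u ∈ S,
      Filter.Tendsto (fun m => List.foldl pol u ((List.range m).map Hs))
        Filter.atTop (nhds (sy u)))
    (hpolContr : ∀ u ∈ S, ∀ v ∈ S, ∀ H : P, ‖pol u H - pol v H‖ ≤ ‖u - v‖)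
    (Θ : X → X) (CΘ : ℝ) (hCΘ : 0 < CΘ)
    (hΘS : ∀ u : X, Θ u ∈ S) (hΘid : ∀ u ∈ S, Θ u = u)
    (hΘlip : ∀ u v : X, ‖Θ u - Θ v‖ ≤ CΘ * ‖u - v‖)
    (hpolext : ∀ u : X, ∀ H : P, pol u H = pol (Θ u) H)
    (hsyext : ∀ u : X, sy u = sy (Θ u))
    (C : Set X) (hCS : C ⊆ S) (hCclosed : IsClosed C)
    (hCpol : ∀ u ∈ C, ∀ H : P, pol u H ∈ C)
    (hCsy : ∀ u ∈ C, sy u ∈ C)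
    (x y : X) (hx : x ∈ C) (hy : y ∈ S \ C)
    (hxH : ∀ H : P, pol x H = x) (hyH : ∀ H : P, pol y H = y)
    (ε : ℝ) (hε : 0 < ε)
    (hxy : ‖x - y‖ ≤ Metric.infDist y C + ε ^ 2) :
    ∃ ξ ∈ Petal ε x y ∩ C, Petal ε ξ y ∩ C = {ξ} ∧ ‖ξ - sy ξ‖ < ε := by
  classical
  -- the set of fixed points of all polarizations inside C
  set T : Set X := {u | u ∈ C ∧ ∀ H : P, pol u H = u} with hTdef
  have hTsub : T ⊆ C := fun u hu => hu.1
  have hTx : x ∈ T := ⟨hx, hxH⟩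
  have hTclosed : IsClosed T := by
    have hP : Nonempty P := inferInstance
    have hpiece : ∀ H : P, IsClosed (C ∩ (fun u => pol u H - u) ⁻¹' {0}) := by
      intro H
      have hcont : ContinuousOn (fun u : X => pol u H - u) C := by
        have h1 : ContinuousOn (fun u : X => pol u H) C := by
          have hmap : Set.MapsTo (fun u : X => (u, H)) C (S ×ˢ Set.univ) :=
            fun u hu => ⟨hCS hu, trivial⟩
          exact hpolCont.comp ((continuous_id.prodMk continuous_const).continuousOn) hmap
        exact h1.sub continuousOn_id
      exact hcont.preimage_isClosed_of_isClosed hCclosed isClosed_singleton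
    have hTeq : T = ⋂ H : P, (C ∩ (fun u => pol u H - u) ⁻¹' {0}) := by
      ext u
      simp only [hTdef, Set.mem_iInter, Set.mem_inter_iff, Set.mem_preimage,
        Set.mem_singleton_iff, Set.mem_setOf_eq, sub_eq_zero]
      constructor
      · rintro ⟨huC, hfix⟩ H; exact ⟨huC, hfix H⟩
      · intro h
        have H₀ : P := Classical.arbitrary P
        exact ⟨(h H₀).1, fun H => (h H).2⟩
    rw [hTeq]
    exact isClosed_iInter hpiece
  -- basic properties of sy
  obtain ⟨Hs, hHs⟩ := happrox
  have hfoldS : ∀ (L : List P), ∀ u ∈ S, List.foldl pol u L ∈ S := by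
    intro L
    induction L with
    | nil => intro u hu; simpa using hu
    | cons a l ih =>
      intro u hu
      simpa [List.foldl] using ih (pol u a) (hpolS u hu a)
  have hfoldContr : ∀ (L : List P), ∀ u ∈ S, ∀ v ∈ S,
      ‖List.foldl pol u L - List.foldl pol v L‖ ≤ ‖u - v‖ := by
    intro L
    induction L with
    | nil => intro u _ v _; simp
    | cons a l ih =>
      intro u hu v hv
      calc ‖List.foldl pol u (a :: l) - List.foldl pol v (a :: l)‖
          = ‖List.foldl pol (pol u a) l - List.foldl pol (pol v a) l‖ := by
            simp [List.foldl]
        _ ≤ ‖pol u a - pol v a‖ := ih (pol u a) (hpolS u hu a) (pol v a) (hpolS v hv a)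
        _ ≤ ‖u - v‖ := hpolContr u hu v hv a
  have hsyLip : ∀ u ∈ S, ∀ v ∈ S, ‖sy u - sy v‖ ≤ ‖u - v‖ := by
    intro u hu v hv
    have h3 : Filter.Tendsto
        (fun m => ‖List.foldl pol u ((List.range m).map Hs) -
          List.foldl pol v ((List.range m).map Hs)‖)
        Filter.atTop (nhds ‖sy u - sy v‖) := ((hHs u hu).sub (hHs v hv)).norm
    exact le_of_tendsto h3 (Filter.Eventually.of_forall fun m =>
      hfoldContr _ u hu v hv)
  have hsyFix : ∀ u ∈ S, (∀ H : P, pol u H = u) → sy u = u := by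
    intro u hu hf
    have hconst : ∀ L : List P, List.foldl pol u L = u := by
      intro L
      induction L with
      | nil => rfl
      | cons a l ih => simp [List.foldl, hf a, ih]
    have h1 := hHs u hu
    simp only [hconst] at h1
    exact tendsto_nhds_unique h1 tendsto_const_nhds
  have hsyy : sy y = y := hsyFix y hy.1 hyH
  -- apply the petal Ekeland principle on T
  obtain ⟨ξ, hξT, hξpetal, hξmin⟩ := petal_ekeland T hTclosed y x hTx ε hε
  have hξC : ξ ∈ C := hξT.1
  have hξS : ξ ∈ S := hCS hξC
  have hsyξ : sy ξ = ξ := hsyFix ξ hξS hξT.2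
  refine ⟨ξ, ⟨hξpetal, hξC⟩, ?_, ?_⟩
  · ext z
    simp only [Set.mem_inter_iff, Set.mem_singleton_iff, Petal, Set.mem_setOf_eq]
    constructor
    · rintro ⟨hzP, hzC⟩
      have hzS : z ∈ S := hCS hzC
      have hwT : sy z ∈ T := ⟨hCsy z hzC, fun H => (hsypol z hzS H).1⟩
      have h1 : ‖sy z - ξ‖ ≤ ‖z - ξ‖ := by
        calc ‖sy z - ξ‖ = ‖sy z - sy ξ‖ := by rw [hsyξ]
          _ ≤ ‖z - ξ‖ := hsyLip z hzS ξ hξS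
      have h2 : ‖sy z - y‖ ≤ ‖z - y‖ := by
        calc ‖sy z - y‖ = ‖sy z - sy y‖ := by rw [hsyy]
          _ ≤ ‖z - y‖ := hsyLip z hzS y hy.1
      have hw : sy z = ξ := by
        refine hξmin (sy z) hwT ?_
        nlinarith [mul_le_mul_of_nonneg_left h1 hε.le]
      have h3 : ‖ξ - y‖ ≤ ‖z - y‖ := by rw [← hw]; exact h2
      have h4 : ε * ‖z - ξ‖ ≤ 0 := by linarith
      have h5 : ‖z - ξ‖ ≤ 0 := nonpos_of_mul_nonpos_right (by linarith) hε
      exact sub_eq_zero.mp (norm_le_zero_iff.mp h5)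
    · rintro rfl
      exact ⟨by simp, hξC⟩
  · rw [hsyξ]
    simpa using hε
end
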